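/- arXiv:1912.07311 — 8 statements merged into one kernel-verified Lean document; each statement's English description precedes it below -/
import Mathlib

section
/- Let j ∈ ℕ, N = 2j+1, and let λ₂, λ_d, λ_p, λ_t, α₁, α₂, α₃ be real numbers. Suppose Φ : M³ → ℝ and W ∈ ℝ satisfy: (i) for all m₁, m₁' ∈ M, Σ_{m₂,m₃∈M} (−1)^{(j−m₂)+(j−m₃)} Φ(m₁,m₂,m₃)·Φ(−m₁',−m₂,−m₃) = (1/N)·(−1)^{j−m₁}·δ_{m₁,m₁'}, and likewise for all m₂,m₂' ∈ M, Σ_{m₁,m₃∈M} (−1)^{(j−m₁)+(j−m₃)} Φ(m₁,m₂,m₃)·Φ(−m₁,−m₂',−m₃) = (1/N)·(−1)^{j−m₂}·δ_{m₂,m₂'}, and for all m₃,m₃' ∈ M, Σ_{m₁,m₂∈M} (−1)^{(j−m₁)+(j−m₂)} Φ(m₁,m₂,m₃)·Φ(−m₁,−m₂,−m₃') = (1/N)·(−1)^{j−m₃}·δ_{m₃,m₃'}; (ii) for all (m₁,m₂,m₃) ∈ M³, Σ_{m₁',m₂',m₃'∈M} (−1)^{(j−m₁')+(j−m₂')+(j−m₃')}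 Φ(m₁,m₂',−m₃')·Φ(−m₁',m₂,m₃')·Φ(m₁',−m₂',m₃) = W·Φ(m₁,m₂,m₃). Let γ ∈ ℝ satisfy γ²·(λ_d + λ_p(α₁+α₂+α₃) + λ_t·N^{3/2}·W) = −λ₂. Then t := γ·Φ satisfies the Fourier-space field equations: for all (m₁,m₂,m₃) ∈ M³, 0 = λ₂·t(m₁,m₂,m₃) + λ_d·(Σ_{m₁',m₂',m₃'} (−1)^{(j−m₁')+(j−m₂')+(j−m₃')} t(m₁',m₂',m₃')·t(−m₁',−m₂',−m₃'))·t(m₁,m₂,m₃) + λ_p·N·[α₁·Σ_{m₁',m₂',m₃'} (−1)^{(j−m₁')+(j−m₂')+(j−m₃')} t(m₁,m₂',m₃')·t(−m₁',−m₂',−m₃')·t(m₁',m₂,m₃) + α₂·Σ_{m₁',m₂',m₃'} (−1)^{(j−m₁')+(j−m₂')+(j−m₃')} t(m₁',m₂,m₃')·t(−m₁',−m₂',−m₃')·t(m₁,m₂',m₃) + α₃·Σ_{m₁',m₂',m₃'} (−1)^{(j−m₁')+(j−m₂')+(j−m₃')} t(m₁',m₂',m₃)·t(−m₁',−m₂',−m₃')·t(m₁,m₂,m₃')]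 + λ_t·N^{3/2}·Σ_{m₁',m₂',m₃'} (−1)^{(j−m₁')+(j−m₂')+(j−m₃')} t(m₁,m₂',−m₃')·t(−m₁',m₂,m₃')·t(m₁',−m₂',m₃). -/
open Finset

/-- The main Proposition of the paper, in conditional form: if `Φ : M³ → ℝ` satisfies the
orthogonality relations (i) and the triangle identity (ii) (in the paper, `Φ` is the Wigner
`3jm` symbol with all spins equal to `j` and `W` is the `6j` symbol `{j j j; j j j}`), and
`γ² (λ_d + λ_p(α₁+α₂+α₃) + λ_t N^{3/2} W) = -λ₂`, then `t = γ Φ` solves the Fourier-space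
field equations of the quartic `O(N)³` tensor model. -/
theorem so3_invariant_solution (j N : ℕ) (hN : N = 2 * j + 1)
    (l2 ld lp lt a1 a2 a3 W γ : ℝ)
    (Φ : ℤ → ℤ → ℤ → ℝ)
    (M : Finset ℤ) (hM : M = Finset.Icc (-(j : ℤ)) (j : ℤ))
    (horth1 : ∀ m1 ∈ M, ∀ m1' ∈ M,
      ∑ m2 ∈ M, ∑ m3 ∈ M,
        (-1 : ℝ) ^ (((j : ℤ) - m2) + ((j : ℤ) - m3)) *
          (Φ m1 m2 m3 * Φ (-m1') (-m2) (-m3))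
        = 1 / (N : ℝ) * (-1 : ℝ) ^ ((j : ℤ) - m1) * (if m1 = m1' then 1 else 0))
    (horth2 : ∀ m2 ∈ M, ∀ m2' ∈ M,
      ∑ m1 ∈ M, ∑ m3 ∈ M,
        (-1 : ℝ) ^ (((j : ℤ) - m1) + ((j : ℤ) - m3)) *
          (Φ m1 m2 m3 * Φ (-m1) (-m2') (-m3))
        = 1 / (N : ℝ) * (-1 : ℝ) ^ ((j : ℤ) - m2) * (if m2 = m2' then 1 else 0))
    (horth3 : ∀ m3 ∈ M, ∀ m3' ∈ M,
      ∑ m1 ∈ M, ∑ m2 ∈ M,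
        (-1 : ℝ) ^ (((j : ℤ) - m1) + ((j : ℤ) - m2)) *
          (Φ m1 m2 m3 * Φ (-m1) (-m2) (-m3'))
        = 1 / (N : ℝ) * (-1 : ℝ) ^ ((j : ℤ) - m3) * (if m3 = m3' then 1 else 0))
    (htriangle : ∀ m1 ∈ M, ∀ m2 ∈ M, ∀ m3 ∈ M,
      ∑ m1' ∈ M, ∑ m2' ∈ M, ∑ m3' ∈ M,
        (-1 : ℝ) ^ (((j : ℤ) - m1') + ((j : ℤ) - m2') + ((j : ℤ) - m3')) *
          (Φ m1 m2' (-m3') * Φ (-m1') m2 m3' * Φ m1' (-m2') m3)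
        = W * Φ m1 m2 m3)
    (hγ : γ ^ 2 * (ld + lp * (a1 + a2 + a3) + lt * (N : ℝ) ^ ((3 : ℝ) / 2) * W) = -l2)
    (t : ℤ → ℤ → ℤ → ℝ) (ht : t = fun m1 m2 m3 => γ * Φ m1 m2 m3) :
    ∀ m1 ∈ M, ∀ m2 ∈ M, ∀ m3 ∈ M,
      0 = l2 * t m1 m2 m3
        + ld * (∑ m1' ∈ M, ∑ m2' ∈ M, ∑ m3' ∈ M,
            (-1 : ℝ) ^ (((j : ℤ) - m1') + ((j : ℤ) - m2') + ((j : ℤ) - m3')) *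
              (t m1' m2' m3' * t (-m1') (-m2') (-m3'))) * t m1 m2 m3
        + lp * (N : ℝ) *
            (a1 * ∑ m1' ∈ M, ∑ m2' ∈ M, ∑ m3' ∈ M,
                (-1 : ℝ) ^ (((j : ℤ) - m1') + ((j : ℤ) - m2') + ((j : ℤ) - m3')) *
                  (t m1 m2' m3' * t (-m1') (-m2') (-m3') * t m1' m2 m3)
             + a2 * ∑ m1' ∈ M, ∑ m2' ∈ M, ∑ m3' ∈ M,
                (-1 : ℝ) ^ (((j : ℤ) - m1') + ((j : ℤ) - m2') + ((j : ℤ) - m3')) *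
                  (t m1' m2 m3' * t (-m1') (-m2') (-m3') * t m1 m2' m3)
             + a3 * ∑ m1' ∈ M, ∑ m2' ∈ M, ∑ m3' ∈ M,
                (-1 : ℝ) ^ (((j : ℤ) - m1') + ((j : ℤ) - m2') + ((j : ℤ) - m3')) *
                  (t m1' m2' m3 * t (-m1') (-m2') (-m3') * t m1 m2 m3'))
        + lt * (N : ℝ) ^ ((3 : ℝ) / 2) *
            ∑ m1' ∈ M, ∑ m2' ∈ M, ∑ m3' ∈ M,
              (-1 : ℝ) ^ (((j : ℤ) - m1') + ((j : ℤ) - m2') + ((j : ℤ) - m3')) *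
                (t m1 m2' (-m3') * t (-m1') m2 m3' * t m1' (-m2') m3) := by

  intro m1 hm1 m2 hm2 m3 hm3
  have hne : (-1 : ℝ) ≠ 0 := by norm_num
  have hN0 : (N : ℝ) ≠ 0 := Nat.cast_ne_zero.mpr (by omega)
  have hsp2 : ∀ y z : ℤ, (-1 : ℝ) ^ (((j : ℤ) - y) + ((j : ℤ) - z))
      = (-1 : ℝ) ^ ((j : ℤ) - y) * (-1 : ℝ) ^ ((j : ℤ) - z) := by
    intro y z; rw [zpow_add₀ hne]
  have hsp3 : ∀ x y z : ℤ,
      (-1 : ℝ) ^ (((j : ℤ) - x) + ((j : ℤ) - y) + ((j : ℤ) - z))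
      = (-1 : ℝ) ^ ((j : ℤ) - x) * (-1 : ℝ) ^ ((j : ℤ) - y) * (-1 : ℝ) ^ ((j : ℤ) - z) := by
    intro x y z; rw [zpow_add₀ hne, zpow_add₀ hne]
  have hss : ∀ x : ℤ, (-1 : ℝ) ^ ((j : ℤ) - x) * (-1 : ℝ) ^ ((j : ℤ) - x) = 1 := by
    intro x
    rw [← zpow_add₀ hne]
    have h2 : (j : ℤ) - x + ((j : ℤ) - x) = 2 * ((j : ℤ) - x) := by ring
    rw [h2, zpow_mul]
    norm_num
  have hcard : (M.card : ℝ) = (N : ℝ) := by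
    have : M.card = N := by
      rw [hM, Int.card_Icc]
      omega
    rw [this]
  -- the delta sum
  have hSd : (∑ m1' ∈ M, ∑ m2' ∈ M, ∑ m3' ∈ M,
      (-1 : ℝ) ^ (((j : ℤ) - m1') + ((j : ℤ) - m2') + ((j : ℤ) - m3')) *
        (Φ m1' m2' m3' * Φ (-m1') (-m2') (-m3'))) = 1 := by
    have h1 : ∀ a ∈ M, (∑ m2' ∈ M, ∑ m3' ∈ M,
        (-1 : ℝ) ^ (((j : ℤ) - a) + ((j : ℤ) - m2') + ((j : ℤ) - m3')) *
          (Φ a m2' m3' * Φ (-a) (-m2') (-m3'))) = (N : ℝ)⁻¹ := by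
      intro a ha
      have h := horth1 a ha a ha
      rw [if_pos rfl, mul_one] at h
      have hstep : (∑ m2' ∈ M, ∑ m3' ∈ M,
          (-1 : ℝ) ^ (((j : ℤ) - a) + ((j : ℤ) - m2') + ((j : ℤ) - m3')) *
            (Φ a m2' m3' * Φ (-a) (-m2') (-m3')))
          = (-1 : ℝ) ^ ((j : ℤ) - a) * ∑ m2' ∈ M, ∑ m3' ∈ M,
              (-1 : ℝ) ^ (((j : ℤ) - m2') + ((j : ℤ) - m3')) *
                (Φ a m2' m3' * Φ (-a) (-m2') (-m3')) := by
        rw [Finset.mul_sum]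
        refine Finset.sum_congr rfl fun x _ => ?_
        rw [Finset.mul_sum]
        refine Finset.sum_congr rfl fun y _ => ?_
        rw [hsp3, hsp2]; ring
      rw [hstep, h]
      have := hss a
      calc (-1 : ℝ) ^ ((j : ℤ) - a) * (1 / (N : ℝ) * (-1 : ℝ) ^ ((j : ℤ) - a)) = ((-1 : ℝ) ^ ((j : ℤ) - a) * (-1 : ℝ) ^ ((j : ℤ) - a)) * (N : ℝ)⁻¹ := by ring
        _ = (N : ℝ)⁻¹ := by rw [hss a]; ring
    rw [Finset.sum_congr rfl h1, Finset.sum_const, nsmul_eq_mul, hcard]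
    field_simp
  -- pillow 1
  have hP1 : (∑ m1' ∈ M, ∑ m2' ∈ M, ∑ m3' ∈ M,
      (-1 : ℝ) ^ (((j : ℤ) - m1') + ((j : ℤ) - m2') + ((j : ℤ) - m3')) *
        (Φ m1 m2' m3' * Φ (-m1') (-m2') (-m3') * Φ m1' m2 m3))
      = (N : ℝ)⁻¹ * Φ m1 m2 m3 := by
    have h1 : ∀ a ∈ M, (∑ m2' ∈ M, ∑ m3' ∈ M,
        (-1 : ℝ) ^ (((j : ℤ) - a) + ((j : ℤ) - m2') + ((j : ℤ) - m3')) *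
          (Φ m1 m2' m3' * Φ (-a) (-m2') (-m3') * Φ a m2 m3))
        = ((-1 : ℝ) ^ ((j : ℤ) - a) * Φ a m2 m3) * (1 / (N : ℝ) * (-1 : ℝ) ^ ((j : ℤ) - m1) * (if m1 = a then 1 else 0)) := by
      intro a ha
      have h := horth1 m1 hm1 a ha
      have hstep : (∑ m2' ∈ M, ∑ m3' ∈ M,
          (-1 : ℝ) ^ (((j : ℤ) - a) + ((j : ℤ) - m2') + ((j : ℤ) - m3')) *
            (Φ m1 m2' m3' * Φ (-a) (-m2') (-m3') * Φ a m2 m3))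
          = ((-1 : ℝ) ^ ((j : ℤ) - a) * Φ a m2 m3) * ∑ m2' ∈ M, ∑ m3' ∈ M,
              (-1 : ℝ) ^ (((j : ℤ) - m2') + ((j : ℤ) - m3')) *
                (Φ m1 m2' m3' * Φ (-a) (-m2') (-m3')) := by
        rw [Finset.mul_sum]
        refine Finset.sum_congr rfl fun x _ => ?_
        rw [Finset.mul_sum]
        refine Finset.sum_congr rfl fun y _ => ?_
        rw [hsp3, hsp2]; ring
      rw [hstep, h]
    rw [Finset.sum_congr rfl h1]
    rw [Finset.sum_eq_single m1
      (fun b _ hbne => by simp [if_neg (Ne.symm hbne)])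
      (fun h => absurd hm1 h)]
    rw [if_pos rfl, mul_one]
    calc ((-1 : ℝ) ^ ((j : ℤ) - m1) * Φ m1 m2 m3) * (1 / (N : ℝ) * (-1 : ℝ) ^ ((j : ℤ) - m1))
        = ((-1 : ℝ) ^ ((j : ℤ) - m1) * (-1 : ℝ) ^ ((j : ℤ) - m1)) * ((N : ℝ)⁻¹ * Φ m1 m2 m3) := by ring
      _ = (N : ℝ)⁻¹ * Φ m1 m2 m3 := by rw [hss m1]; ring
  -- pillow 2
  have hP2 : (∑ m1' ∈ M, ∑ m2' ∈ M, ∑ m3' ∈ M,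
      (-1 : ℝ) ^ (((j : ℤ) - m1') + ((j : ℤ) - m2') + ((j : ℤ) - m3')) *
        (Φ m1' m2 m3' * Φ (-m1') (-m2') (-m3') * Φ m1 m2' m3))
      = (N : ℝ)⁻¹ * Φ m1 m2 m3 := by
    rw [Finset.sum_comm]
    have h1 : ∀ b ∈ M, (∑ m1' ∈ M, ∑ m3' ∈ M,
        (-1 : ℝ) ^ (((j : ℤ) - m1') + ((j : ℤ) - b) + ((j : ℤ) - m3')) *
          (Φ m1' m2 m3' * Φ (-m1') (-b) (-m3') * Φ m1 b m3))
        = ((-1 : ℝ) ^ ((j : ℤ) - b) * Φ m1 b m3) * (1 / (N : ℝ) * (-1 : ℝ) ^ ((j : ℤ) - m2) * (if m2 = b then 1 else 0)) := by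
      intro b hb
      have h := horth2 m2 hm2 b hb
      have hstep : (∑ m1' ∈ M, ∑ m3' ∈ M,
          (-1 : ℝ) ^ (((j : ℤ) - m1') + ((j : ℤ) - b) + ((j : ℤ) - m3')) *
            (Φ m1' m2 m3' * Φ (-m1') (-b) (-m3') * Φ m1 b m3))
          = ((-1 : ℝ) ^ ((j : ℤ) - b) * Φ m1 b m3) * ∑ m1' ∈ M, ∑ m3' ∈ M,
              (-1 : ℝ) ^ (((j : ℤ) - m1') + ((j : ℤ) - m3')) *
                (Φ m1' m2 m3' * Φ (-m1') (-b) (-m3')) := by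
        rw [Finset.mul_sum]
        refine Finset.sum_congr rfl fun x _ => ?_
        rw [Finset.mul_sum]
        refine Finset.sum_congr rfl fun y _ => ?_
        rw [hsp3, hsp2]; ring
      rw [hstep, h]
    rw [Finset.sum_congr rfl h1]
    rw [Finset.sum_eq_single m2
      (fun b _ hbne => by simp [if_neg (Ne.symm hbne)])
      (fun h => absurd hm2 h)]
    rw [if_pos rfl, mul_one]
    calc ((-1 : ℝ) ^ ((j : ℤ) - m2) * Φ m1 m2 m3) * (1 / (N : ℝ) * (-1 : ℝ) ^ ((j : ℤ) - m2))
        = ((-1 : ℝ) ^ ((j : ℤ) - m2) * (-1 : ℝ) ^ ((j : ℤ) - m2)) * ((N : ℝ)⁻¹ * Φ m1 m2 m3) := by ring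
      _ = (N : ℝ)⁻¹ * Φ m1 m2 m3 := by rw [hss m2]; ring
  -- pillow 3
  have hP3 : (∑ m1' ∈ M, ∑ m2' ∈ M, ∑ m3' ∈ M,
      (-1 : ℝ) ^ (((j : ℤ) - m1') + ((j : ℤ) - m2') + ((j : ℤ) - m3')) *
        (Φ m1' m2' m3 * Φ (-m1') (-m2') (-m3') * Φ m1 m2 m3'))
      = (N : ℝ)⁻¹ * Φ m1 m2 m3 := by
    have hsw : (∑ m1' ∈ M, ∑ m2' ∈ M, ∑ m3' ∈ M,
        (-1 : ℝ) ^ (((j : ℤ) - m1') + ((j : ℤ) - m2') + ((j : ℤ) - m3')) *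
          (Φ m1' m2' m3 * Φ (-m1') (-m2') (-m3') * Φ m1 m2 m3'))
        = ∑ m3' ∈ M, ∑ m1' ∈ M, ∑ m2' ∈ M,
            (-1 : ℝ) ^ (((j : ℤ) - m1') + ((j : ℤ) - m2') + ((j : ℤ) - m3')) *
              (Φ m1' m2' m3 * Φ (-m1') (-m2') (-m3') * Φ m1 m2 m3') := by
      calc (∑ m1' ∈ M, ∑ m2' ∈ M, ∑ m3' ∈ M,
          (-1 : ℝ) ^ (((j : ℤ) - m1') + ((j : ℤ) - m2') + ((j : ℤ) - m3')) *
            (Φ m1' m2' m3 * Φ (-m1') (-m2') (-m3') * Φ m1 m2 m3'))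
          = ∑ m1' ∈ M, ∑ m3' ∈ M, ∑ m2' ∈ M,
              (-1 : ℝ) ^ (((j : ℤ) - m1') + ((j : ℤ) - m2') + ((j : ℤ) - m3')) *
                (Φ m1' m2' m3 * Φ (-m1') (-m2') (-m3') * Φ m1 m2 m3') :=
            Finset.sum_congr rfl fun a _ => Finset.sum_comm
        _ = _ := Finset.sum_comm
    rw [hsw]
    have h1 : ∀ c ∈ M, (∑ m1' ∈ M, ∑ m2' ∈ M,
        (-1 : ℝ) ^ (((j : ℤ) - m1') + ((j : ℤ) - m2') + ((j : ℤ) - c)) *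
          (Φ m1' m2' m3 * Φ (-m1') (-m2') (-c) * Φ m1 m2 c))
        = ((-1 : ℝ) ^ ((j : ℤ) - c) * Φ m1 m2 c) * (1 / (N : ℝ) * (-1 : ℝ) ^ ((j : ℤ) - m3) * (if m3 = c then 1 else 0)) := by
      intro c hc
      have h := horth3 m3 hm3 c hc
      have hstep : (∑ m1' ∈ M, ∑ m2' ∈ M,
          (-1 : ℝ) ^ (((j : ℤ) - m1') + ((j : ℤ) - m2') + ((j : ℤ) - c)) *
            (Φ m1' m2' m3 * Φ (-m1') (-m2') (-c) * Φ m1 m2 c))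
          = ((-1 : ℝ) ^ ((j : ℤ) - c) * Φ m1 m2 c) * ∑ m1' ∈ M, ∑ m2' ∈ M,
              (-1 : ℝ) ^ (((j : ℤ) - m1') + ((j : ℤ) - m2')) *
                (Φ m1' m2' m3 * Φ (-m1') (-m2') (-c)) := by
        rw [Finset.mul_sum]
        refine Finset.sum_congr rfl fun x _ => ?_
        rw [Finset.mul_sum]
        refine Finset.sum_congr rfl fun y _ => ?_
        rw [hsp3, hsp2]; ring
      rw [hstep, h]
    rw [Finset.sum_congr rfl h1]
    rw [Finset.sum_eq_single m3
      (fun b _ hbne => by simp [if_neg (Ne.symm hbne)])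
      (fun h => absurd hm3 h)]
    rw [if_pos rfl, mul_one]
    calc ((-1 : ℝ) ^ ((j : ℤ) - m3) * Φ m1 m2 m3) * (1 / (N : ℝ) * (-1 : ℝ) ^ ((j : ℤ) - m3))
        = ((-1 : ℝ) ^ ((j : ℤ) - m3) * (-1 : ℝ) ^ ((j : ℤ) - m3)) * ((N : ℝ)⁻¹ * Φ m1 m2 m3) := by ring
      _ = (N : ℝ)⁻¹ * Φ m1 m2 m3 := by rw [hss m3]; ring
  have hT := htriangle m1 hm1 m2 hm2 m3 hm3
  -- now substitute t and pull out powers of γ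
  simp only [ht]
  have ed : (∑ m1' ∈ M, ∑ m2' ∈ M, ∑ m3' ∈ M,
      (-1 : ℝ) ^ (((j : ℤ) - m1') + ((j : ℤ) - m2') + ((j : ℤ) - m3')) *
        ((γ * Φ m1' m2' m3') * (γ * Φ (-m1') (-m2') (-m3')))) = γ ^ 2 := by
    calc (∑ m1' ∈ M, ∑ m2' ∈ M, ∑ m3' ∈ M,
        (-1 : ℝ) ^ (((j : ℤ) - m1') + ((j : ℤ) - m2') + ((j : ℤ) - m3')) *
          ((γ * Φ m1' m2' m3') * (γ * Φ (-m1') (-m2') (-m3'))))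
        = ∑ m1' ∈ M, ∑ m2' ∈ M, ∑ m3' ∈ M, γ ^ 2 *
            ((-1 : ℝ) ^ (((j : ℤ) - m1') + ((j : ℤ) - m2') + ((j : ℤ) - m3')) *
              (Φ m1' m2' m3' * Φ (-m1') (-m2') (-m3'))) :=
          Finset.sum_congr rfl fun a _ => Finset.sum_congr rfl fun b _ =>
            Finset.sum_congr rfl fun c _ => by ring
      _ = γ ^ 2 := by simp only [← Finset.mul_sum]; rw [hSd, mul_one]
  have cube : ∀ (f : ℤ → ℤ → ℤ → ℝ) (v : ℝ),
      (∑ m1' ∈ M, ∑ m2' ∈ M, ∑ m3' ∈ M,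
        (-1 : ℝ) ^ (((j : ℤ) - m1') + ((j : ℤ) - m2') + ((j : ℤ) - m3')) * f m1' m2' m3') = v →
      (∑ m1' ∈ M, ∑ m2' ∈ M, ∑ m3' ∈ M,
        (-1 : ℝ) ^ (((j : ℤ) - m1') + ((j : ℤ) - m2') + ((j : ℤ) - m3')) *
          (γ ^ 3 * f m1' m2' m3')) = γ ^ 3 * v := by
    intro f v hv
    calc (∑ m1' ∈ M, ∑ m2' ∈ M, ∑ m3' ∈ M,
        (-1 : ℝ) ^ (((j : ℤ) - m1') + ((j : ℤ) - m2') + ((j : ℤ) - m3')) *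
          (γ ^ 3 * f m1' m2' m3'))
        = ∑ m1' ∈ M, ∑ m2' ∈ M, ∑ m3' ∈ M, γ ^ 3 *
            ((-1 : ℝ) ^ (((j : ℤ) - m1') + ((j : ℤ) - m2') + ((j : ℤ) - m3')) * f m1' m2' m3') :=
          Finset.sum_congr rfl fun a _ => Finset.sum_congr rfl fun b _ =>
            Finset.sum_congr rfl fun c _ => by ring
      _ = γ ^ 3 * v := by simp only [← Finset.mul_sum]; rw [hv]
  have e1 : (∑ m1' ∈ M, ∑ m2' ∈ M, ∑ m3' ∈ M,
      (-1 : ℝ) ^ (((j : ℤ) - m1') + ((j : ℤ) - m2') + ((j : ℤ) - m3')) *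
        ((γ * Φ m1 m2' m3') * (γ * Φ (-m1') (-m2') (-m3')) * (γ * Φ m1' m2 m3)))
      = γ ^ 3 * ((N : ℝ)⁻¹ * Φ m1 m2 m3) := by
    have := cube (fun a b c => Φ m1 b c * Φ (-a) (-b) (-c) * Φ a m2 m3) _ hP1
    calc (∑ m1' ∈ M, ∑ m2' ∈ M, ∑ m3' ∈ M,
        (-1 : ℝ) ^ (((j : ℤ) - m1') + ((j : ℤ) - m2') + ((j : ℤ) - m3')) *
          ((γ * Φ m1 m2' m3') * (γ * Φ (-m1') (-m2') (-m3')) * (γ * Φ m1' m2 m3)))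
        = ∑ m1' ∈ M, ∑ m2' ∈ M, ∑ m3' ∈ M,
            (-1 : ℝ) ^ (((j : ℤ) - m1') + ((j : ℤ) - m2') + ((j : ℤ) - m3')) *
              (γ ^ 3 * (Φ m1 m2' m3' * Φ (-m1') (-m2') (-m3') * Φ m1' m2 m3)) :=
          Finset.sum_congr rfl fun a _ => Finset.sum_congr rfl fun b _ =>
            Finset.sum_congr rfl fun c _ => by ring
      _ = γ ^ 3 * ((N : ℝ)⁻¹ * Φ m1 m2 m3) := this
  have e2 : (∑ m1' ∈ M, ∑ m2' ∈ M, ∑ m3' ∈ M,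
      (-1 : ℝ) ^ (((j : ℤ) - m1') + ((j : ℤ) - m2') + ((j : ℤ) - m3')) *
        ((γ * Φ m1' m2 m3') * (γ * Φ (-m1') (-m2') (-m3')) * (γ * Φ m1 m2' m3)))
      = γ ^ 3 * ((N : ℝ)⁻¹ * Φ m1 m2 m3) := by
    have := cube (fun a b c => Φ a m2 c * Φ (-a) (-b) (-c) * Φ m1 b m3) _ hP2
    calc (∑ m1' ∈ M, ∑ m2' ∈ M, ∑ m3' ∈ M,
        (-1 : ℝ) ^ (((j : ℤ) - m1') + ((j : ℤ) - m2') + ((j : ℤ) - m3')) *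
          ((γ * Φ m1' m2 m3') * (γ * Φ (-m1') (-m2') (-m3')) * (γ * Φ m1 m2' m3)))
        = ∑ m1' ∈ M, ∑ m2' ∈ M, ∑ m3' ∈ M,
            (-1 : ℝ) ^ (((j : ℤ) - m1') + ((j : ℤ) - m2') + ((j : ℤ) - m3')) *
              (γ ^ 3 * (Φ m1' m2 m3' * Φ (-m1') (-m2') (-m3') * Φ m1 m2' m3)) :=
          Finset.sum_congr rfl fun a _ => Finset.sum_congr rfl fun b _ =>
            Finset.sum_congr rfl fun c _ => by ring
      _ = γ ^ 3 * ((N : ℝ)⁻¹ * Φ m1 m2 m3) := this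
  have e3 : (∑ m1' ∈ M, ∑ m2' ∈ M, ∑ m3' ∈ M,
      (-1 : ℝ) ^ (((j : ℤ) - m1') + ((j : ℤ) - m2') + ((j : ℤ) - m3')) *
        ((γ * Φ m1' m2' m3) * (γ * Φ (-m1') (-m2') (-m3')) * (γ * Φ m1 m2 m3')))
      = γ ^ 3 * ((N : ℝ)⁻¹ * Φ m1 m2 m3) := by
    have := cube (fun a b c => Φ a b m3 * Φ (-a) (-b) (-c) * Φ m1 m2 c) _ hP3
    calc (∑ m1' ∈ M, ∑ m2' ∈ M, ∑ m3' ∈ M,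
        (-1 : ℝ) ^ (((j : ℤ) - m1') + ((j : ℤ) - m2') + ((j : ℤ) - m3')) *
          ((γ * Φ m1' m2' m3) * (γ * Φ (-m1') (-m2') (-m3')) * (γ * Φ m1 m2 m3')))
        = ∑ m1' ∈ M, ∑ m2' ∈ M, ∑ m3' ∈ M,
            (-1 : ℝ) ^ (((j : ℤ) - m1') + ((j : ℤ) - m2') + ((j : ℤ) - m3')) *
              (γ ^ 3 * (Φ m1' m2' m3 * Φ (-m1') (-m2') (-m3') * Φ m1 m2 m3')) :=
          Finset.sum_congr rfl fun a _ => Finset.sum_congr rfl fun b _ =>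
            Finset.sum_congr rfl fun c _ => by ring
      _ = γ ^ 3 * ((N : ℝ)⁻¹ * Φ m1 m2 m3) := this
  have et : (∑ m1' ∈ M, ∑ m2' ∈ M, ∑ m3' ∈ M,
      (-1 : ℝ) ^ (((j : ℤ) - m1') + ((j : ℤ) - m2') + ((j : ℤ) - m3')) *
        ((γ * Φ m1 m2' (-m3')) * (γ * Φ (-m1') m2 m3') * (γ * Φ m1' (-m2') m3)))
      = γ ^ 3 * (W * Φ m1 m2 m3) := by
    have := cube (fun a b c => Φ m1 b (-c) * Φ (-a) m2 c * Φ a (-b) m3) _ hT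
    calc (∑ m1' ∈ M, ∑ m2' ∈ M, ∑ m3' ∈ M,
        (-1 : ℝ) ^ (((j : ℤ) - m1') + ((j : ℤ) - m2') + ((j : ℤ) - m3')) *
          ((γ * Φ m1 m2' (-m3')) * (γ * Φ (-m1') m2 m3') * (γ * Φ m1' (-m2') m3)))
        = ∑ m1' ∈ M, ∑ m2' ∈ M, ∑ m3' ∈ M,
            (-1 : ℝ) ^ (((j : ℤ) - m1') + ((j : ℤ) - m2') + ((j : ℤ) - m3')) *
              (γ ^ 3 * (Φ m1 m2' (-m3') * Φ (-m1') m2 m3' * Φ m1' (-m2') m3)) :=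
          Finset.sum_congr rfl fun a _ => Finset.sum_congr rfl fun b _ =>
            Finset.sum_congr rfl fun c _ => by ring
      _ = γ ^ 3 * (W * Φ m1 m2 m3) := this
  rw [ed, e1, e2, e3, et]
  have hNN : (N : ℝ) * (N : ℝ)⁻¹ = 1 := mul_inv_cancel₀ hN0
  linear_combination (-(γ * Φ m1 m2 m3)) * hγ +
    (-(lp * (a1 + a2 + a3) * γ ^ 3 * Φ m1 m2 m3)) * hNN
end

section
/- Let N ≥ 1, let φ be a constant tensor field, and let c, K ∈ ℝ be such that: (a) Σ_{b,c} φ_{abc}·φ_{a'bc} = c·δ_{aa'} for all a,a'; Σ_{a,c} φ_{abc}·φ_{ab'c} = c·δ_{bb'} for all b,b'; Σ_{a,b} φ_{abc}·φ_{abc'} = c·δ_{cc'} for all c,c'; and (b) Σ_{a',b',c'} φ_{ab'c'}·φ_{a'bc'}·φ_{a'b'c} = K·φ_{abc} for all a,b,c. Then φ satisfies the field equations if and only if (λ₂ + (λ_d + λ_p(α₁+α₂+α₃))·c/N² + λ_t·K/N^{3/2})·φ_{abc} = 0 for all a,b,c. In particular, if φ is not identically zero, then φ satisfies the field equations if and only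 if λ₂ + (λ_d + λ_p(α₁+α₂+α₃))·c/N² + λ_t·K/N^{3/2} = 0. -/
open Finset

/-- The potential of the quartic `O(N)^3` tensor model. -/
noncomputable def potV (N : ℕ) (l2 ld lp lt a1 a2 a3 : ℝ)
    (φ : Fin N → Fin N → Fin N → ℝ) : ℝ :=
  l2 / 2 * (∑ a, ∑ b, ∑ c, (φ a b c) ^ 2)
  + ld / (4 * (N : ℝ) ^ 3) * (∑ a, ∑ b, ∑ c, (φ a b c) ^ 2) ^ 2
  + lp / (4 * (N : ℝ) ^ 2) *
      (a1 * ∑ a, ∑ b, ∑ c, ∑ a', ∑ b', ∑ c',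
          φ a b c * φ a b' c' * φ a' b' c' * φ a' b c
       + a2 * ∑ a, ∑ b, ∑ c, ∑ a', ∑ b', ∑ c',
          φ a b c * φ a' b c' * φ a' b' c' * φ a b' c
       + a3 * ∑ a, ∑ b, ∑ c, ∑ a', ∑ b', ∑ c',
          φ a b c * φ a' b' c * φ a' b' c' * φ a b c')
  + lt / (4 * (N : ℝ) ^ ((3 : ℝ) / 2)) *
      ∑ a, ∑ b, ∑ c, ∑ a', ∑ b', ∑ c',
        φ a b c * φ a b' c' * φ a' b c' * φ a' b' c

/-- The field equations of the quartic `O(N)^3` tensor model (vanishing gradient of `potV`). -/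
def FieldEqs (N : ℕ) (l2 ld lp lt a1 a2 a3 : ℝ)
    (φ : Fin N → Fin N → Fin N → ℝ) : Prop :=
  ∀ a b c,
    l2 * φ a b c
    + ld / (N : ℝ) ^ 3 * (∑ a', ∑ b', ∑ c', (φ a' b' c') ^ 2) * φ a b c
    + lp / (N : ℝ) ^ 2 *
        (a1 * ∑ a', ∑ b', ∑ c', φ a b' c' * φ a' b' c' * φ a' b c
         + a2 * ∑ a', ∑ b', ∑ c', φ a' b c' * φ a' b' c' * φ a b' c
         + a3 * ∑ a', ∑ b', ∑ c', φ a' b' c * φ a' b' c' * φ a b c')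
    + lt / (N : ℝ) ^ ((3 : ℝ) / 2) *
        ∑ a', ∑ b', ∑ c', φ a b' c' * φ a' b c' * φ a' b' c = 0

/-- If the slices of `φ` are orthogonal in all three channels with common constant `c₀`
(hypothesis (a)) and `φ` is an eigentensor of the tetrahedral contraction with eigenvalue `K`
(hypothesis (b)), then `φ` solves the field equations iff
`(λ₂ + (λ_d + λ_p(α₁+α₂+α₃)) c₀/N² + λ_t K/N^{3/2}) φ = 0`; in particular, if `φ ≠ 0`,
iff `λ₂ + (λ_d + λ_p(α₁+α₂+α₃)) c₀/N² + λ_t K/N^{3/2} = 0`. -/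
theorem fieldEqs_of_orthogonal_slices (N : ℕ) (hN : 1 ≤ N)
    (l2 ld lp lt a1 a2 a3 : ℝ)
    (φ : Fin N → Fin N → Fin N → ℝ) (c0 K : ℝ)
    (ha1 : ∀ a a', ∑ b, ∑ c, φ a b c * φ a' b c = c0 * (if a = a' then 1 else 0))
    (ha2 : ∀ b b', ∑ a, ∑ c, φ a b c * φ a b' c = c0 * (if b = b' then 1 else 0))
    (ha3 : ∀ c c', ∑ a, ∑ b, φ a b c * φ a b c' = c0 * (if c = c' then 1 else 0))
    (hb : ∀ a b c, ∑ a', ∑ b', ∑ c', φ a b' c' * φ a' b c' * φ a' b' c = K * φ a b c) :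
    (FieldEqs N l2 ld lp lt a1 a2 a3 φ ↔
      ∀ a b c, (l2 + (ld + lp * (a1 + a2 + a3)) * c0 / (N : ℝ) ^ 2
        + lt * K / (N : ℝ) ^ ((3 : ℝ) / 2)) * φ a b c = 0)
    ∧ (φ ≠ 0 →
        (FieldEqs N l2 ld lp lt a1 a2 a3 φ ↔
          l2 + (ld + lp * (a1 + a2 + a3)) * c0 / (N : ℝ) ^ 2
            + lt * K / (N : ℝ) ^ ((3 : ℝ) / 2) = 0)) := by
  have hN0 : (N : ℝ) ≠ 0 := by positivity
  have ht : (N : ℝ) ^ ((3 : ℝ) / 2) ≠ 0 := by positivity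
  -- sum of squares
  have h0 : ∑ a', ∑ b', ∑ c', (φ a' b' c') ^ 2 = (N : ℝ) * c0 := by
    have : ∀ a' : Fin N, ∑ b', ∑ c', (φ a' b' c') ^ 2 = c0 := by
      intro a'
      have := ha1 a' a'
      simp only [if_pos rfl, mul_one] at this
      simpa [sq] using this
    simp [this, mul_comm]
  have h1 : ∀ a b c, ∑ a', ∑ b', ∑ c', φ a b' c' * φ a' b' c' * φ a' b c
      = c0 * φ a b c := by
    intro a b c
    have key : ∀ a' : Fin N, ∑ b', ∑ c', φ a b' c' * φ a' b' c' * φ a' b c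
        = (c0 * if a = a' then 1 else 0) * φ a' b c := by
      intro a'
      rw [← ha1 a a', Finset.sum_mul]
      exact Finset.sum_congr rfl fun b' _ => by rw [Finset.sum_mul]
    simp_rw [key]
    simp [Finset.sum_ite_eq, mul_ite]
  have h2 : ∀ a b c, ∑ a', ∑ b', ∑ c', φ a' b c' * φ a' b' c' * φ a b' c
      = c0 * φ a b c := by
    intro a b c
    rw [Finset.sum_comm]
    have key : ∀ b' : Fin N, ∑ a', ∑ c', φ a' b c' * φ a' b' c' * φ a b' c
        = (c0 * if b = b' then 1 else 0) * φ a b' c := by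
      intro b'
      rw [← ha2 b b', Finset.sum_mul]
      exact Finset.sum_congr rfl fun a' _ => by rw [Finset.sum_mul]
    simp_rw [key]
    simp [Finset.sum_ite_eq, mul_ite]
  have h3 : ∀ a b c, ∑ a', ∑ b', ∑ c', φ a' b' c * φ a' b' c' * φ a b c'
      = c0 * φ a b c := by
    intro a b c
    have step : ∀ a' : Fin N, ∑ b', ∑ c', φ a' b' c * φ a' b' c' * φ a b c'
        = ∑ c', ∑ b', φ a' b' c * φ a' b' c' * φ a b c' := fun a' => Finset.sum_comm

    simp_rw [step]
    rw [Finset.sum_comm]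
    have key : ∀ c' : Fin N, ∑ a', ∑ b', φ a' b' c * φ a' b' c' * φ a b c'
        = (c0 * if c = c' then 1 else 0) * φ a b c' := by
      intro c'
      rw [← ha3 c c', Finset.sum_mul]
      exact Finset.sum_congr rfl fun a' _ => by rw [Finset.sum_mul]
    simp_rw [key]
    simp [Finset.sum_ite_eq, mul_ite]
  have main : ∀ a b c,
      l2 * φ a b c
      + ld / (N : ℝ) ^ 3 * (∑ a', ∑ b', ∑ c', (φ a' b' c') ^ 2) * φ a b c
      + lp / (N : ℝ) ^ 2 *
          (a1 * ∑ a', ∑ b', ∑ c', φ a b' c' * φ a' b' c' * φ a' b c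
           + a2 * ∑ a', ∑ b', ∑ c', φ a' b c' * φ a' b' c' * φ a b' c
           + a3 * ∑ a', ∑ b', ∑ c', φ a' b' c * φ a' b' c' * φ a b c')
      + lt / (N : ℝ) ^ ((3 : ℝ) / 2) *
          ∑ a', ∑ b', ∑ c', φ a b' c' * φ a' b c' * φ a' b' c
      = (l2 + (ld + lp * (a1 + a2 + a3)) * c0 / (N : ℝ) ^ 2
          + lt * K / (N : ℝ) ^ ((3 : ℝ) / 2)) * φ a b c := by
    intro a b c
    rw [h0, h1, h2, h3, hb]
    field_simp
    ring
  have hiff : FieldEqs N l2 ld lp lt a1 a2 a3 φ ↔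
      ∀ a b c, (l2 + (ld + lp * (a1 + a2 + a3)) * c0 / (N : ℝ) ^ 2
        + lt * K / (N : ℝ) ^ ((3 : ℝ) / 2)) * φ a b c = 0 := by
    constructor
    · intro h a b c; rw [← main a b c]; exact h a b c
    · intro h a b c; rw [main a b c]; exact h a b c
  refine ⟨hiff, fun hφ => hiff.trans ?_⟩
  constructor
  · intro h
    obtain ⟨a, ha⟩ : ∃ a, φ a ≠ 0 := by
      by_contra hc; push_neg at hc; exact hφ (funext hc)
    obtain ⟨b, hb'⟩ : ∃ b, φ a b ≠ 0 := by
      by_contra hc; push_neg at hc; exact ha (funext hc)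
    obtain ⟨c, hc'⟩ : ∃ c, φ a b c ≠ 0 := by
      by_contra hc; push_neg at hc; exact hb' (funext hc)
    have := h a b c
    exact (mul_eq_zero.mp this).resolve_right hc'
  · intro h a b c; rw [h, zero_mul]
end

section
/- Let j ∈ ℕ, N = 2j+1, and let R : Fin N × Fin N → ℝ be an orthogonal matrix, i.e. Σ_{b} R_{ab}·R_{a'b} = δ_{aa'} for all a,a'. Define its discrete Fourier transform t_R : M² → ℂ by t_R(m₁,m₂) = N^{−2}·i^{−(2j−|m₁|−|m₂|)}·Σ_{a,b∈Fin N} R_{ab}·exp((2πi/N)(a m₁ + b m₂)). Then for all m₁, m₂ ∈ M: Σ_{m∈M} (−1)^{j−m}·t_R(m₁,m)·t_R(m₂,−m) = (1/N²)·(−1)^{j−m₁}·δ_{m₁,−m₂}. -/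
/-!
With `ζ = exp (2πi/N)`, `t_R(m₁, m) = N⁻² i^(|m₁| + |m| - 2j) S(m₁, m)` where
`S(m₁, m) = Σ_{a,b} R_ab ζ^(a m₁ + b m)`. Since `|m| ≡ m (mod 2)`, the sign `(-1)^(j-m)` cancels the
`m`-dependence of the phases, so the left side is a constant phase times `Σ_m S(m₁, m) S(m₂, -m)`.
Summing `ζ^(m (b - d))` over the `N` consecutive integers `m ∈ M` gives `N δ_bd`; orthogonality
of the rows of `R` then leaves `N Σ_a ζ^(a (m₁ + m₂)) = N² δ_{m₁,-m₂}`, and for `m₁ = -m₂` the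
remaining phase `i^(2|m₁| - 2j)` is `(-1)^(j-m₁)`.
-/

open Finset

theorem Fin.natCast_dvd_sub_iff {N : ℕ} (b d : Fin N) : (N : ℤ) ∣ (b : ℤ) - d ↔ b = d := by
  refine ⟨fun h => Fin.ext ?_, fun h => by simp [h]⟩
  have := Int.eq_zero_of_abs_lt_dvd h (by rw [abs_lt]; omega)
  omega

namespace IsPrimitiveRoot

variable {K : Type*} [Field K] {ζ : K} {N : ℕ}

theorem sum_range_zpow_mul (hζ : IsPrimitiveRoot ζ N) (k : ℤ) :
    ∑ n ∈ range N, ζ ^ ((n : ℤ) * k) = if (N : ℤ) ∣ k then (N : K) else 0 := by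
  simp_rw [mul_comm _ k, zpow_mul, zpow_natCast]
  split_ifs with hk
  · simp [(hζ.zpow_eq_one_iff_dvd k).mpr hk]
  · have hne : ζ ^ k ≠ 1 := mt (hζ.zpow_eq_one_iff_dvd k).mp hk
    rw [geom_sum_eq hne, ← zpow_natCast, ← zpow_mul, mul_comm, zpow_mul, zpow_natCast,
      hζ.pow_eq_one, one_zpow, sub_self, zero_div]

theorem sum_Ico_zpow_mul (hζ : IsPrimitiveRoot ζ N) (c k : ℤ) :
    ∑ m ∈ Ico c (c + N), ζ ^ (m * k) = if (N : ℤ) ∣ k then (N : K) else 0 := by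
  obtain rfl | hN := N.eq_zero_or_pos
  · simp
  have hshift (n : ℕ) : ζ ^ ((c + n) * k) = (ζ ^ k) ^ c * ζ ^ ((n : ℤ) * k) := by
    rw [add_mul, zpow_add₀ (hζ.ne_zero hN.ne'), mul_comm c, zpow_mul]
  rw [Int.Ico_eq_finset_map, sum_map, add_sub_cancel_left, Int.toNat_natCast]
  simp only [Function.Embedding.trans_apply, Nat.castEmbedding_apply, addLeftEmbedding_apply,
    hshift, ← mul_sum, sum_range_zpow_mul hζ]
  split_ifs with hk
  · rw [(hζ.zpow_eq_one_iff_dvd k).mpr hk, one_zpow, one_mul]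
  · rw [mul_zero]

end IsPrimitiveRoot

section Fourier

variable {K : Type*} [Field K] {N : ℕ} {ζ : K}

def fourierSum (ζ : K) (u : Fin N → K) (m : ℤ) : K := ∑ b, u b * ζ ^ ((b : ℤ) * m)

theorem sum_Ico_fourierSum_mul_fourierSum_neg (hζ : IsPrimitiveRoot ζ N) (c : ℤ)
    (u v : Fin N → K) :
    ∑ m ∈ Ico c (c + N), fourierSum ζ u m * fourierSum ζ v (-m) = N * ∑ b, u b * v b := by
  have hprod (m : ℤ) (b d : Fin N) :
      u b * ζ ^ ((b : ℤ) * m) * (v d * ζ ^ ((d : ℤ) * -m)) = u b * v d * ζ ^ (m * (b - d)) := by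
    rw [mul_sub, sub_eq_add_neg, zpow_add₀ (hζ.ne_zero (Fin.pos b).ne'), mul_neg, mul_comm m,
      mul_comm m]
    ring
  calc ∑ m ∈ Ico c (c + N), fourierSum ζ u m * fourierSum ζ v (-m)
      = ∑ b, ∑ d, u b * v d * ∑ m ∈ Ico c (c + N), ζ ^ (m * (b - d)) := by
        simp_rw [fourierSum, sum_mul_sum, hprod, mul_sum]
        rw [sum_comm]
        exact sum_congr rfl fun b _ => sum_comm
    _ = ∑ b, ∑ d, u b * v d * if b = d then (N : K) else 0 := by
        simp only [hζ.sum_Ico_zpow_mul, Fin.natCast_dvd_sub_iff]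
    _ = N * ∑ b, u b * v b := by
        simp [mul_sum, mul_comm]

theorem sum_fourierSum_mul_fourierSum_of_orthogonal (hζ : IsPrimitiveRoot ζ N)
    (R : Fin N → Fin N → K) (hR : ∀ a a', ∑ b, R a b * R a' b = if a = a' then 1 else 0)
    (m₁ m₂ : ℤ) :
    ∑ b, fourierSum ζ (R · b) m₁ * fourierSum ζ (R · b) m₂ =
      if (N : ℤ) ∣ m₁ + m₂ then (N : K) else 0 := by
  calc ∑ b, fourierSum ζ (R · b) m₁ * fourierSum ζ (R · b) m₂
      = ∑ a : Fin N, ∑ a' : Fin N,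
          ζ ^ ((a : ℤ) * m₁) * ζ ^ ((a' : ℤ) * m₂) * ∑ b, R a b * R a' b := by
        simp_rw [fourierSum, sum_mul_sum, mul_sum]
        rw [sum_comm]
        refine sum_congr rfl fun a _ => ?_
        rw [sum_comm]
        refine sum_congr rfl fun a' _ => sum_congr rfl fun b _ => by ring
    _ = ∑ a : Fin N, ζ ^ ((a : ℤ) * (m₁ + m₂)) := by
        simp only [hR, mul_ite, mul_one, mul_zero, sum_ite_eq, mem_univ, if_true]
        refine sum_congr rfl fun a _ => ?_
        rw [mul_add, zpow_add₀ (hζ.ne_zero (Fin.pos a).ne')]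
    _ = if (N : ℤ) ∣ m₁ + m₂ then (N : K) else 0 := by
        rw [Fin.sum_univ_eq_sum_range (fun n => ζ ^ ((n : ℤ) * (m₁ + m₂))),
          hζ.sum_range_zpow_mul]

end Fourier

namespace Complex

theorem I_zpow_congr {x y : ℤ} (h : x ≡ y [ZMOD 4]) : I ^ x = I ^ y := by
  rw [I_zpow_eq_zpow_mod x, h, ← I_zpow_eq_zpow_mod]

theorem neg_one_zpow_eq_I_zpow (k : ℤ) : (-1 : ℂ) ^ k = I ^ (2 * k) := by
  rw [zpow_mul, zpow_two, I_mul_I]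

theorem neg_one_zpow_mul_I_zpow_mul_I_zpow (j m a b : ℤ) :
    (-1 : ℂ) ^ (j - m) * (I ^ (-(2 * j - a - |m|)) * I ^ (-(2 * j - b - |-m|))) =
      I ^ (a + b - 2 * j) := by
  rw [neg_one_zpow_eq_I_zpow, ← zpow_add₀ I_ne_zero, ← zpow_add₀ I_ne_zero, abs_neg]
  refine I_zpow_congr (Int.modEq_iff_dvd.mpr ?_)
  rcases abs_cases m with ⟨hm, -⟩ | ⟨hm, -⟩ <;> omega

theorem I_zpow_abs_add_abs_neg (j m : ℤ) : I ^ (|m| + |-m| - 2 * j) = (-1 : ℂ) ^ (j - m) := by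
  rw [neg_one_zpow_eq_I_zpow, abs_neg]
  refine I_zpow_congr (Int.modEq_iff_dvd.mpr ?_)
  rcases abs_cases m with ⟨hm, -⟩ | ⟨hm, -⟩ <;> omega

end Complex

/-- The discrete Fourier transform of an orthogonal matrix `R ∈ O(N)` is orthogonal with
respect to the `SU(2)`-invariant metric `g^{m₁m₂} = (-1)^{j-m₁} δ_{m₁,-m₂}`:
`Σ_{m∈M} (-1)^{j-m} t_R(m₁,m) t_R(m₂,-m) = (1/N²)(-1)^{j-m₁} δ_{m₁,-m₂}`. -/
theorem fourier_orthogonality (j N : ℕ) (hN : N = 2 * j + 1)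
    (R : Fin N → Fin N → ℝ)
    (hR : ∀ a a', ∑ b, R a b * R a' b = if a = a' then (1 : ℝ) else 0)
    (tR : ℤ → ℤ → ℂ)
    (htR : tR = fun m1 m2 =>
      (N : ℂ) ^ (-2 : ℤ) * Complex.I ^ (-(2 * (j : ℤ) - |m1| - |m2|)) *
        ∑ a : Fin N, ∑ b : Fin N,
          (R a b : ℂ) * Complex.exp ((2 * (Real.pi : ℂ) * Complex.I / (N : ℂ)) *
            (((a : ℕ) : ℂ) * (m1 : ℂ) + ((b : ℕ) : ℂ) * (m2 : ℂ)))) :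
    ∀ m1 ∈ Finset.Icc (-(j : ℤ)) (j : ℤ), ∀ m2 ∈ Finset.Icc (-(j : ℤ)) (j : ℤ),
      ∑ m ∈ Finset.Icc (-(j : ℤ)) (j : ℤ),
        (-1 : ℂ) ^ ((j : ℤ) - m) * (tR m1 m * tR m2 (-m))
        = 1 / (N : ℂ) ^ 2 * (-1 : ℂ) ^ ((j : ℤ) - m1) *
            (if m1 = -m2 then 1 else 0) := by
  intro m₁ hm₁ m₂ hm₂
  rw [mem_Icc] at hm₁ hm₂
  set ζ : ℂ := Complex.exp (2 * Real.pi * Complex.I / N)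
  have hζ : IsPrimitiveRoot ζ N := Complex.isPrimitiveRoot_exp N (by omega)
  set S : ℤ → ℤ → ℂ := fun x y =>
    fourierSum ζ (fun b => fourierSum ζ (fun a => (R a b : ℂ)) x) y
  have htS (x y : ℤ) :
      tR x y = (N : ℂ) ^ (-2 : ℤ) * Complex.I ^ (-(2 * (j : ℤ) - |x| - |y|)) * S x y := by
    have hexp (a b : ℕ) : Complex.exp (2 * Real.pi * Complex.I / N * (a * x + b * y)) =
        ζ ^ ((a : ℤ) * x) * ζ ^ ((b : ℤ) * y) := by
      simp only [ζ, ← Complex.exp_int_mul, ← Complex.exp_add]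
      push_cast
      ring_nf
    simp only [htR, S, fourierSum, hexp, sum_mul]
    rw [sum_comm]
    simp only [mul_assoc]
  have hSS :
      ∑ m ∈ Icc (-(j : ℤ)) j, S m₁ m * S m₂ (-m) = N * N * if m₁ = -m₂ then 1 else 0 := by
    have hIcc : Icc (-(j : ℤ)) j = Ico (-(j : ℤ)) (-j + N) := by
      ext; simp only [mem_Icc, mem_Ico]; omega
    have hRC (a a' : Fin N) : ∑ b, (R a b : ℂ) * R a' b = if a = a' then 1 else 0 := by
      have h := hR a a'
      split_ifs at h ⊢ <;> exact_mod_cast h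
    have hdvd : (N : ℤ) ∣ m₁ + m₂ ↔ m₁ = -m₂ := by
      refine ⟨fun h => ?_, fun h => by simp [h]⟩
      have := Int.eq_zero_of_abs_lt_dvd h (by rw [abs_lt]; omega)
      omega
    rw [hIcc, sum_Ico_fourierSum_mul_fourierSum_neg hζ,
      sum_fourierSum_mul_fourierSum_of_orthogonal hζ _ hRC]
    simp only [hdvd, mul_ite, mul_one, mul_zero]
  calc ∑ m ∈ Icc (-(j : ℤ)) j, (-1 : ℂ) ^ ((j : ℤ) - m) * (tR m₁ m * tR m₂ (-m))
      = ∑ m ∈ Icc (-(j : ℤ)) j, ((N : ℂ) ^ (-2 : ℤ)) ^ 2 * Complex.I ^ (|m₁| + |m₂| - 2 * j) *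
          (S m₁ m * S m₂ (-m)) := by
        refine sum_congr rfl fun m _ => ?_
        rw [htS, htS, ← Complex.neg_one_zpow_mul_I_zpow_mul_I_zpow j m]
        ring
    _ = ((N : ℂ) ^ (-2 : ℤ)) ^ 2 * Complex.I ^ (|m₁| + |m₂| - 2 * j) *
          (N * N * if m₁ = -m₂ then 1 else 0) := by
        rw [← mul_sum, hSS]
    _ = 1 / (N : ℂ) ^ 2 * (-1 : ℂ) ^ ((j : ℤ) - m₁) * (if m₁ = -m₂ then 1 else 0) := by
        split_ifs with h
        · rw [show m₂ = -m₁ by omega, Complex.I_zpow_abs_add_abs_neg]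
          have hN0 : (N : ℂ) ≠ 0 := by exact_mod_cast (by omega : N ≠ 0)
          field_simp
        · simp
end

section
/- Assume λ_p = λ_t = 0, λ_d > 0 and λ₂ < 0. Then: (1) a constant tensor field φ satisfies the field equations if and only if either φ = 0 or Σ_{a,b,c} φ_{abc}² = −λ₂N³/λ_d; (2) for every constant tensor field ψ, V(ψ) ≥ −λ₂²N³/(4λ_d), with equality if and only if Σ_{a,b,c} ψ_{abc}² = −λ₂N³/λ_d; in particular every nonzero solution of the field equations is an absolute minimum of V and its on-shell value −λ₂²N³/(4λ_d) is negative. -/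
open Finset

/-- For `λ_p = λ_t = 0`, `λ_d > 0` and `λ₂ < 0` (the `O(N³)`-symmetric vector-model case):
(1) `φ` solves the field equations iff `φ = 0` or `Σ φ² = -λ₂ N³/λ_d`;
(2) `V` is bounded below by `-λ₂² N³/(4λ_d)`, with equality iff `Σ ψ² = -λ₂ N³/λ_d`;
in particular every nonzero solution is an absolute minimum of `V`, with negative
on-shell value `-λ₂² N³/(4λ_d)`. -/
theorem vector_model_solutions (N : ℕ) (hN : 1 ≤ N)
    (l2 ld lp lt a1 a2 a3 : ℝ)
    (hlp : lp = 0) (hlt : lt = 0) (hld : 0 < ld) (hl2 : l2 < 0) :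
    (∀ φ : Fin N → Fin N → Fin N → ℝ,
        FieldEqs N l2 ld lp lt a1 a2 a3 φ ↔
          φ = 0 ∨ ∑ a, ∑ b, ∑ c, (φ a b c) ^ 2 = -l2 * (N : ℝ) ^ 3 / ld)
    ∧ (∀ ψ : Fin N → Fin N → Fin N → ℝ,
        potV N l2 ld lp lt a1 a2 a3 ψ ≥ -l2 ^ 2 * (N : ℝ) ^ 3 / (4 * ld)
        ∧ (potV N l2 ld lp lt a1 a2 a3 ψ = -l2 ^ 2 * (N : ℝ) ^ 3 / (4 * ld) ↔
            ∑ a, ∑ b, ∑ c, (ψ a b c) ^ 2 = -l2 * (N : ℝ) ^ 3 / ld))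
    ∧ (∀ φ : Fin N → Fin N → Fin N → ℝ,
        FieldEqs N l2 ld lp lt a1 a2 a3 φ → φ ≠ 0 →
          (∀ ψ, potV N l2 ld lp lt a1 a2 a3 φ ≤ potV N l2 ld lp lt a1 a2 a3 ψ)
          ∧ potV N l2 ld lp lt a1 a2 a3 φ = -l2 ^ 2 * (N : ℝ) ^ 3 / (4 * ld)
          ∧ potV N l2 ld lp lt a1 a2 a3 φ < 0) := by
  subst hlp hlt
  have hNpos : (0:ℝ) < (N:ℝ)^3 := by
    have : (0:ℝ) < (N:ℝ) := by exact_mod_cast Nat.lt_of_lt_of_le Nat.zero_lt_one hN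
    positivity
  have hld' : ld ≠ 0 := ne_of_gt hld
  have hkey : -l2 ^ 2 * (N:ℝ) ^ 3 / (4 * ld) = -(l2 ^ 2 * (N:ℝ) ^ 3 / (4 * ld)) := by ring
  -- simplified field equations
  have hFE : ∀ (φ : Fin N → Fin N → Fin N → ℝ),
      FieldEqs N l2 ld 0 0 a1 a2 a3 φ ↔
      ∀ a b c, (l2 + ld / (N:ℝ)^3 * (∑ a', ∑ b', ∑ c', (φ a' b' c')^2)) * φ a b c = 0 := by
    intro φ
    unfold FieldEqs
    constructor <;> intro h a b c <;> have := h a b c <;> simp only [zero_div, zero_mul,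
      add_zero, zero_add] at * <;> linarith [this]
  -- potential formula
  have hV : ∀ (ψ : Fin N → Fin N → Fin N → ℝ),
      potV N l2 ld 0 0 a1 a2 a3 ψ =
      ld / (4 * (N:ℝ)^3) * ((∑ a, ∑ b, ∑ c, (ψ a b c)^2) + l2 * (N:ℝ)^3 / ld)^2
        - l2^2 * (N:ℝ)^3 / (4 * ld) := by
    intro ψ
    unfold potV
    field_simp
    ring
  have part1 : ∀ φ : Fin N → Fin N → Fin N → ℝ,
      FieldEqs N l2 ld 0 0 a1 a2 a3 φ ↔
        φ = 0 ∨ ∑ a, ∑ b, ∑ c, (φ a b c) ^ 2 = -l2 * (N : ℝ) ^ 3 / ld := by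
    intro φ
    rw [hFE]
    constructor
    · intro h
      by_cases hz : φ = 0
      · exact Or.inl hz
      · right
        obtain ⟨a, ha⟩ : ∃ a, φ a ≠ 0 := by
          by_contra hc; push_neg at hc; exact hz (funext hc)
        obtain ⟨b, hb⟩ : ∃ b, φ a b ≠ 0 := by
          by_contra hc; push_neg at hc; exact ha (funext hc)
        obtain ⟨c, hc⟩ : ∃ c, φ a b c ≠ 0 := by
          by_contra hcc; push_neg at hcc; exact hb (funext hcc)
        have := h a b c
        rcases mul_eq_zero.mp this with h1 | h2
        · field_simp at h1 ⊢
          linarith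
        · exact absurd h2 hc
    · rintro (rfl | hS) a b c
      · simp
      · rw [hS]
        have : l2 + ld / (N:ℝ)^3 * (-l2 * (N:ℝ)^3 / ld) = 0 := by
          field_simp
          ring
        rw [this, zero_mul]
  refine ⟨part1, ?_, ?_⟩
  · intro ψ
    rw [hV ψ]
    set S := ∑ a, ∑ b, ∑ c, (ψ a b c)^2 with hSdef
    constructor
    · have : 0 ≤ ld / (4 * (N:ℝ)^3) * (S + l2 * (N:ℝ)^3 / ld)^2 :=
        mul_nonneg (le_of_lt (div_pos hld (by linarith))) (sq_nonneg _)
      linarith [hkey]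
    · constructor
      · intro h
        have h2 : ld / (4 * (N:ℝ)^3) * (S + l2 * (N:ℝ)^3 / ld)^2 = 0 := by linarith [hkey]
        have h3 : (S + l2 * (N:ℝ)^3 / ld)^2 = 0 := by
          have hc : ld / (4 * (N:ℝ)^3) ≠ 0 := ne_of_gt (div_pos hld (by linarith))
          exact (mul_eq_zero.mp h2).resolve_left hc
        have h4 : S + l2 * (N:ℝ)^3 / ld = 0 := by
          exact pow_eq_zero_iff (by norm_num) |>.mp h3
        field_simp at h4 ⊢
        linarith
      · intro hS
        rw [hS]
        have : -l2 * (N:ℝ)^3 / ld + l2 * (N:ℝ)^3 / ld = 0 := by ring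
        rw [this]
        ring
  · intro φ hfe hz
    have hS : ∑ a, ∑ b, ∑ c, (φ a b c) ^ 2 = -l2 * (N : ℝ) ^ 3 / ld :=
      ((part1 φ).mp hfe).resolve_left hz
    have hmin : potV N l2 ld 0 0 a1 a2 a3 φ = -l2 ^ 2 * (N : ℝ) ^ 3 / (4 * ld) := by
      rw [hV φ, hS]
      have : -l2 * (N:ℝ)^3 / ld + l2 * (N:ℝ)^3 / ld = 0 := by ring
      rw [this]; ring
    refine ⟨?_, hmin, ?_⟩
    · intro ψ
      rw [hmin]
      have := (hV ψ)
      have h0 : 0 ≤ ld / (4 * (N:ℝ)^3) *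
          ((∑ a, ∑ b, ∑ c, (ψ a b c)^2) + l2 * (N:ℝ)^3 / ld)^2 :=
        mul_nonneg (le_of_lt (div_pos hld (by linarith))) (sq_nonneg _)
      linarith [hkey]
    · rw [hmin]
      have hnum : -l2 ^ 2 * (N:ℝ)^3 < 0 := by
        have h1 : 0 < l2 ^ 2 := pow_pos (abs_pos.mpr (ne_of_lt hl2)) 2 |>.trans_le (by rw [sq_abs])
        nlinarith [mul_pos h1 hNpos]
      exact div_neg_of_neg_of_pos hnum (by linarith)
end

section
/- Let u, v, w ∈ ℝ^N be nonzero vectors, set φ_{abc} = u_a·v_b·w_c, and set D = λ_d + λ_p·N·(α₁+α₂+α₃) + λ_t·N^{3/2}. Then φ satisfies the field equations if and only if λ₂ + (D/N³)·|u|²·|v|²·|w|² = 0; in particular, if D ≠ 0, this holds if and only if |u|²·|v|²·|w|² = −λ₂·N³/D. -/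
open Finset

/-!
For `φ = u ⊗ v ⊗ w` each of the cubic contractions in the field equations equals
`|u|²|v|²|w|² φ_{abc}`, so the equation at `(a, b, c)` reads
`(λ₂ + D/N³ |u|²|v|²|w|²) φ_{abc} = 0`, the tetrahedral coupling entering through
`1/N^{3/2} = N^{3/2}/N³`. As `φ` has a nonzero entry, the field equations reduce to this
scalar condition.
-/

noncomputable def fieldEqsLhs (N : ℕ) (l2 ld lp lt a1 a2 a3 : ℝ)
    (φ : Fin N → Fin N → Fin N → ℝ) (a b c : Fin N) : ℝ :=
  l2 * φ a b c
  + ld / (N : ℝ) ^ 3 * (∑ a', ∑ b', ∑ c', (φ a' b' c') ^ 2) * φ a b c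
  + lp / (N : ℝ) ^ 2 *
      (a1 * ∑ a', ∑ b', ∑ c', φ a b' c' * φ a' b' c' * φ a' b c
       + a2 * ∑ a', ∑ b', ∑ c', φ a' b c' * φ a' b' c' * φ a b' c
       + a3 * ∑ a', ∑ b', ∑ c', φ a' b' c * φ a' b' c' * φ a b c')
  + lt / (N : ℝ) ^ ((3 : ℝ) / 2) *
      ∑ a', ∑ b', ∑ c', φ a b' c' * φ a' b c' * φ a' b' c

theorem fieldEqs_iff {N : ℕ} {l2 ld lp lt a1 a2 a3 : ℝ} {φ : Fin N → Fin N → Fin N → ℝ} :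
    FieldEqs N l2 ld lp lt a1 a2 a3 φ ↔
      ∀ a b c, fieldEqsLhs N l2 ld lp lt a1 a2 a3 φ a b c = 0 :=
  Iff.rfl

section RankOne

variable {N : ℕ} (u v w : Fin N → ℝ)

theorem sum_sum_sum_mul_mul (f g h : Fin N → ℝ) :
    ∑ a, ∑ b, ∑ c, f a * g b * h c = (∑ a, f a) * (∑ b, g b) * (∑ c, h c) := by
  rw [sum_mul_sum, sum_mul]
  simp_rw [sum_mul, mul_sum]

/-- Every cubic contraction of `u ⊗ v ⊗ w` collapses to this form. -/
theorem sum_sum_sum_eq_sqNorms_mul {t : Fin N → Fin N → Fin N → ℝ} (K : ℝ)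
    (ht : ∀ a b c, t a b c = u a ^ 2 * v b ^ 2 * w c ^ 2 * K) :
    ∑ a, ∑ b, ∑ c, t a b c = (∑ a, u a ^ 2) * (∑ b, v b ^ 2) * (∑ c, w c ^ 2) * K := by
  rw [← sum_sum_sum_mul_mul, sum_mul]
  simp only [ht, sum_mul]

theorem fieldEqsLhs_rankOne (l2 ld lp lt a1 a2 a3 : ℝ) (a b c : Fin N) :
    fieldEqsLhs N l2 ld lp lt a1 a2 a3 (fun a b c => u a * v b * w c) a b c =
      (l2 + (ld + lp * N * (a1 + a2 + a3) + lt * (N : ℝ) ^ ((3 : ℝ) / 2)) / (N : ℝ) ^ 3 *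
        ((∑ a, u a ^ 2) * (∑ b, v b ^ 2) * (∑ c, w c ^ 2))) * (u a * v b * w c) := by
  have hN : (N : ℝ) ≠ 0 := by exact_mod_cast a.pos.ne'
  have hlt : lt / (N : ℝ) ^ ((3 : ℝ) / 2) = lt * (N : ℝ) ^ ((3 : ℝ) / 2) / (N : ℝ) ^ 3 := by
    have hsq : ((N : ℝ) ^ ((3 : ℝ) / 2)) ^ 2 = (N : ℝ) ^ 3 := by
      rw [← Real.rpow_mul_natCast (Nat.cast_nonneg N)]
      norm_num
    rw [← hsq]
    field_simp
  unfold fieldEqsLhs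
  rw [sum_sum_sum_eq_sqNorms_mul u v w 1 fun _ _ _ => by ring,
    sum_sum_sum_eq_sqNorms_mul u v w (u a * v b * w c) fun _ _ _ => by ring,
    sum_sum_sum_eq_sqNorms_mul u v w (u a * v b * w c) fun _ _ _ => by ring,
    sum_sum_sum_eq_sqNorms_mul u v w (u a * v b * w c) fun _ _ _ => by ring,
    sum_sum_sum_eq_sqNorms_mul u v w (u a * v b * w c) fun _ _ _ => by ring, hlt]
  field_simp
  ring

theorem forall_mul_rankOne_eq_zero_iff {u v w : Fin N → ℝ} (hu : u ≠ 0) (hv : v ≠ 0)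
    (hw : w ≠ 0) (E : ℝ) : (∀ a b c, E * (u a * v b * w c) = 0) ↔ E = 0 := by
  obtain ⟨a, ha⟩ := Function.ne_iff.mp hu
  obtain ⟨b, hb⟩ := Function.ne_iff.mp hv
  obtain ⟨c, hc⟩ := Function.ne_iff.mp hw
  refine ⟨fun h => ?_, fun hE a b c => by rw [hE, zero_mul]⟩
  have hentry : u a * v b * w c ≠ 0 := by simp_all
  exact (mul_eq_zero.mp (h a b c)).resolve_right hentry

end RankOne

theorem add_div_mul_eq_zero_iff {l D n S : ℝ} (hn : n ≠ 0) (hD : D ≠ 0) :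
    l + D / n * S = 0 ↔ S = -l * n / D := by
  rw [eq_div_iff hD]
  field_simp
  constructor <;> intro h <;> linarith

theorem rank_one_solution_general (N : ℕ)
    (l2 ld lp lt a1 a2 a3 : ℝ)
    (u v w : Fin N → ℝ) (hu : u ≠ 0) (hv : v ≠ 0) (hw : w ≠ 0)
    (φ : Fin N → Fin N → Fin N → ℝ) (hφ : φ = fun a b c => u a * v b * w c)
    (D : ℝ)
    (hD : D = ld + lp * (N : ℝ) * (a1 + a2 + a3) + lt * (N : ℝ) ^ ((3 : ℝ) / 2)) :
    (FieldEqs N l2 ld lp lt a1 a2 a3 φ ↔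
      l2 + D / (N : ℝ) ^ 3 *
        ((∑ a, (u a) ^ 2) * (∑ b, (v b) ^ 2) * (∑ c, (w c) ^ 2)) = 0)
    ∧ (D ≠ 0 →
        (FieldEqs N l2 ld lp lt a1 a2 a3 φ ↔
          (∑ a, (u a) ^ 2) * (∑ b, (v b) ^ 2) * (∑ c, (w c) ^ 2)
            = -l2 * (N : ℝ) ^ 3 / D)) := by
  have hfield : FieldEqs N l2 ld lp lt a1 a2 a3 φ ↔
      l2 + D / (N : ℝ) ^ 3 *
        ((∑ a, (u a) ^ 2) * (∑ b, (v b) ^ 2) * (∑ c, (w c) ^ 2)) = 0 := by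
    simp only [fieldEqs_iff, hφ, fieldEqsLhs_rankOne, ← hD]
    exact forall_mul_rankOne_eq_zero_iff hu hv hw _
  obtain ⟨a₀, -⟩ := Function.ne_iff.mp hu
  have hN : (N : ℝ) ^ 3 ≠ 0 := by have := a₀.pos; positivity
  exact ⟨hfield, fun hD0 => hfield.trans (add_div_mul_eq_zero_iff hN hD0)⟩

/-- The rank-one ansatz `φ_{abc} = u_a v_b w_c` (stabilizer `O(N-1)³`) solves the field
equations iff `λ₂ + (D/N³)|u|²|v|²|w|² = 0`, where
`D = λ_d + λ_p N(α₁+α₂+α₃) + λ_t N^{3/2}`; for `D ≠ 0`, iff `|u|²|v|²|w|² = -λ₂N³/D`. -/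
theorem rank_one_solution (N : ℕ) (hN : 1 ≤ N)
    (l2 ld lp lt a1 a2 a3 : ℝ)
    (u v w : Fin N → ℝ) (hu : u ≠ 0) (hv : v ≠ 0) (hw : w ≠ 0)
    (φ : Fin N → Fin N → Fin N → ℝ) (hφ : φ = fun a b c => u a * v b * w c)
    (D : ℝ)
    (hD : D = ld + lp * (N : ℝ) * (a1 + a2 + a3) + lt * (N : ℝ) ^ ((3 : ℝ) / 2)) :
    (FieldEqs N l2 ld lp lt a1 a2 a3 φ ↔
      l2 + D / (N : ℝ) ^ 3 *
        ((∑ a, (u a) ^ 2) * (∑ b, (v b) ^ 2) * (∑ c, (w c) ^ 2)) = 0)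
    ∧ (D ≠ 0 →
        (FieldEqs N l2 ld lp lt a1 a2 a3 φ ↔
          (∑ a, (u a) ^ 2) * (∑ b, (v b) ^ 2) * (∑ c, (w c) ^ 2)
            = -l2 * (N : ℝ) ^ 3 / D)) :=
  rank_one_solution_general N l2 ld lp lt a1 a2 a3 u v w hu hv hw φ hφ D hD
end

section
/- Let u, v, w ∈ ℝ^N, φ_{abc} = u_a·v_b·w_c, D = λ_d + λ_p·N·(α₁+α₂+α₃) + λ_t·N^{3/2} with D ≠ 0, and assume |u|²·|v|²·|w|² = −λ₂·N³/D. Then for any u', v', w' ∈ ℝ^N with ⟨u',u⟩ = 0, ⟨v',v⟩ = 0, ⟨w',w⟩ = 0: H(φ)(u'⊗v'⊗w') = λ₂·(λ_p·N·(α₁+α₂+α₃) + λ_t·N^{3/2})/D · (u'⊗v'⊗w'). -/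
open Finset

/-- The Hessian of `potV` at `φ` (the matrix of second partial derivatives
`H(φ)_{abc,a'b'c'} = ∂²V/∂φ_{abc}∂φ_{a'b'c'}`), acting on a tensor field `χ` by
`(H(φ)χ)_{abc} = Σ_{a'b'c'} H(φ)_{abc,a'b'c'} χ_{a'b'c'}`. -/
noncomputable def hessApply (N : ℕ) (l2 ld lp lt a1 a2 a3 : ℝ)
    (φ χ : Fin N → Fin N → Fin N → ℝ) : Fin N → Fin N → Fin N → ℝ :=
  fun a b c =>
    deriv (fun s : ℝ =>
      deriv (fun t : ℝ =>
        potV N l2 ld lp lt a1 a2 a3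
          (fun a' b' c' => φ a' b' c' + t * χ a' b' c'
            + s * (if a' = a ∧ b' = b ∧ c' = c then (1 : ℝ) else 0))) 0) 0

/-!
The potential is `λ₂/2` times a quadratic invariant plus a combination of five quartic
invariants (double trace, three pillows, tetrahedron), each the diagonal `M (φ, …, φ)` of a
continuous multilinear form given by an index contraction. The mixed derivative of such a
diagonal at `φ` in the directions `χ, ζ` is the sum of `M` over all ways of putting `χ` and `ζ`
into two distinct slots and `φ` into the others. On rank-one tensors every contraction
factors into dot products of the legs. In the pillow and tetrahedral contractions no two slots
share all three indices, so the slot holding `χ = u'⊗v'⊗w'` always shares a leg with a slot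
holding `φ = u⊗v⊗w`, and leg-wise orthogonality kills every term. Only the quadratic and
double-trace terms survive, giving the eigenvalue `λ₂ + λ_d |φ|² / N³`, which the condition on
`|u|²|v|²|w|²` turns into the stated one.
-/

open Function Matrix

namespace TensorModel

def HasMixedDerivAtZero (F : ℝ → ℝ → ℝ) (h : ℝ) : Prop :=
  ∃ F' : ℝ → ℝ, (∀ s, HasDerivAt (F s) (F' s) 0) ∧ HasDerivAt F' h 0

namespace HasMixedDerivAtZero

variable {F G : ℝ → ℝ → ℝ} {h k : ℝ}

theorem deriv_deriv (hF : HasMixedDerivAtZero F h) : deriv (fun s => deriv (F s) 0) 0 = h := by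
  obtain ⟨F', hs, ht⟩ := hF
  simpa only [fun s => (hs s).deriv] using ht.deriv

theorem add (hF : HasMixedDerivAtZero F h) (hG : HasMixedDerivAtZero G k) :
    HasMixedDerivAtZero (fun s t => F s t + G s t) (h + k) := by
  obtain ⟨F', hFs, hF0⟩ := hF
  obtain ⟨G', hGs, hG0⟩ := hG
  exact ⟨fun s => F' s + G' s, fun s => (hFs s).add (hGs s), hF0.add hG0⟩

theorem const_mul (c : ℝ) (hF : HasMixedDerivAtZero F h) :
    HasMixedDerivAtZero (fun s t => c * F s t) (c * h) := by
  obtain ⟨F', hFs, hF0⟩ := hF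
  exact ⟨fun s => c * F' s, fun s => (hFs s).const_mul c, hF0.const_mul c⟩

end HasMixedDerivAtZero

theorem _root_.ContinuousMultilinearMap.hasDerivAt_add_smul {ι 𝕜 E F : Type*} [Fintype ι]
    [DecidableEq ι] [NontriviallyNormedField 𝕜] [NormedAddCommGroup E] [NormedSpace 𝕜 E]
    [NormedAddCommGroup F] [NormedSpace 𝕜 F]
    (M : ContinuousMultilinearMap 𝕜 (fun _ : ι => E) F) (c v : ι → E) :
    HasDerivAt (fun t : 𝕜 => M (c + t • v)) (∑ i, M (update c i (v i))) 0 := by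
  have hline : HasDerivAt (fun t : 𝕜 => c + t • v) v 0 := by
    simpa using ((hasDerivAt_id (0 : 𝕜)).smul_const v).const_add c
  have h := (M.hasFDerivAt (c + (0 : 𝕜) • v)).comp_hasDerivAt (0 : 𝕜) hline
  rwa [ContinuousMultilinearMap.linearDeriv_apply, zero_smul, add_zero] at h

section Multilinear

variable {ι E : Type*} [Fintype ι] [DecidableEq ι] [NormedAddCommGroup E] [NormedSpace ℝ E]

def diagHessian (M : ContinuousMultilinearMap ℝ (fun _ : ι => E) ℝ) (x y z : E) : ℝ :=
  ∑ i, ∑ j ∈ univ.erase i, M (update (update (fun _ => x) i y) j z)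

theorem hasMixedDerivAtZero_diag (M : ContinuousMultilinearMap ℝ (fun _ : ι => E) ℝ)
    (x y z : E) :
    HasMixedDerivAtZero (fun s t => M (fun _ => x + t • y + s • z)) (diagHessian M x y z) := by
  refine ⟨fun s => ∑ i, M (update (fun _ => x + s • z) i y), fun s => ?_, ?_⟩
  · refine (M.hasDerivAt_add_smul (fun _ => x + s • z) (fun _ => y)).congr_of_eventuallyEq
      (Filter.Eventually.of_forall fun t => ?_)
    exact congrArg M (funext fun _ => add_right_comm _ _ _)
  · have hsplit : ∀ s : ℝ, (fun i => M (update (fun _ => x + s • z) i y)) = fun i =>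
        M (update (fun _ => x) i y + s • update (fun _ => z) i 0) := by
      intro s; funext i; congr 1; funext j; by_cases hj : j = i <;> simp [hj]
    simp only [hsplit]
    refine (HasDerivAt.fun_sum (u := univ) (x := (0 : ℝ)) fun i _ =>
      M.hasDerivAt_add_smul (update (fun _ => x) i y) (update (fun _ => z) i 0)).congr_deriv
      (sum_congr rfl fun i _ => ?_)
    rw [← sum_erase univ (a := i)]
    · exact sum_congr rfl fun j hj => by simp [ne_of_mem_erase hj]
    · exact M.map_coord_zero i (by simp)

end Multilinear

section Contraction

variable {n : Type*}

def entryCLM (i : n × n × n) : (n → n → n → ℝ) →L[ℝ] ℝ :=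
  (ContinuousLinearMap.proj (R := ℝ) (φ := fun _ : n => ℝ) i.2.2).comp
    ((ContinuousLinearMap.proj (R := ℝ) (φ := fun _ : n => n → ℝ) i.2.1).comp
      (ContinuousLinearMap.proj (R := ℝ) (φ := fun _ : n => n → n → ℝ) i.1))

/-- `p r i` is the index triple carried by slot `i` for the value `r` of the summation
indices. -/
def contraction {ι κ : Type*} [Fintype ι] [Fintype κ] (p : κ → ι → n × n × n) :
    ContinuousMultilinearMap ℝ (fun _ : ι => n → n → n → ℝ) ℝ :=
  ∑ r, (ContinuousMultilinearMap.mkPiAlgebra ℝ ι ℝ).compContinuousLinearMap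
    fun i => entryCLM (p r i)

theorem contraction_apply {ι κ : Type*} [Fintype ι] [Fintype κ] (p : κ → ι → n × n × n)
    (m : ι → n → n → n → ℝ) :
    contraction p m = ∑ r, ∏ i, m i (p r i).1 (p r i).2.1 (p r i).2.2 := by
  simp [contraction, entryCLM]

def rankOne (x y z : n → ℝ) : n → n → n → ℝ := fun a b c => x a * y b * z c

theorem update_rankOne {ι : Type*} [DecidableEq ι] (x y z : ι → n → ℝ) (i : ι)
    (x' y' z' : n → ℝ) :
    update (fun k => rankOne (x k) (y k) (z k)) i (rankOne x' y' z')
      = fun k => rankOne (update x i x' k) (update y i y' k) (update z i z' k) := by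
  funext k
  by_cases hk : k = i
  · subst hk; simp
  · simp [hk]

end Contraction

section Invariants

variable (n : Type*) [Fintype n]

def quadForm : ContinuousMultilinearMap ℝ (fun _ : Fin 2 => n → n → n → ℝ) ℝ :=
  contraction fun r : n × n × n => ![r, r]

def doubleTrace : ContinuousMultilinearMap ℝ (fun _ : Fin 4 => n → n → n → ℝ) ℝ :=
  contraction fun r : (n × n × n) × (n × n × n) => ![r.1, r.1, r.2, r.2]

def pillow₁ : ContinuousMultilinearMap ℝ (fun _ : Fin 4 => n → n → n → ℝ) ℝ :=
  contraction fun ((a, b, c, a', b', c') : n × n × n × n × n × n) =>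
    ![(a, b, c), (a, b', c'), (a', b', c'), (a', b, c)]

def pillow₂ : ContinuousMultilinearMap ℝ (fun _ : Fin 4 => n → n → n → ℝ) ℝ :=
  contraction fun ((a, b, c, a', b', c') : n × n × n × n × n × n) =>
    ![(a, b, c), (a', b, c'), (a', b', c'), (a, b', c)]

def pillow₃ : ContinuousMultilinearMap ℝ (fun _ : Fin 4 => n → n → n → ℝ) ℝ :=
  contraction fun ((a, b, c, a', b', c') : n × n × n × n × n × n) =>
    ![(a, b, c), (a', b', c), (a', b', c'), (a, b, c')]

def tetrahedron : ContinuousMultilinearMap ℝ (fun _ : Fin 4 => n → n → n → ℝ) ℝ :=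
  contraction fun ((a, b, c, a', b', c') : n × n × n × n × n × n) =>
    ![(a, b, c), (a, b', c'), (a', b, c'), (a', b', c)]

end Invariants

theorem potV_eq_invariants (N : ℕ) (l2 ld lp lt a1 a2 a3 : ℝ) (f : Fin N → Fin N → Fin N → ℝ) :
    potV N l2 ld lp lt a1 a2 a3 f
      = l2 / 2 * quadForm (Fin N) (fun _ => f)
        + ld / (4 * (N : ℝ) ^ 3) * doubleTrace (Fin N) (fun _ => f)
        + lp / (4 * (N : ℝ) ^ 2) * (a1 * pillow₁ (Fin N) (fun _ => f)
          + a2 * pillow₂ (Fin N) (fun _ => f) + a3 * pillow₃ (Fin N) (fun _ => f))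
        + lt / (4 * (N : ℝ) ^ ((3 : ℝ) / 2)) * tetrahedron (Fin N) (fun _ => f) := by
  have hdt : (∑ a, ∑ b, ∑ c, f a b c ^ 2) ^ 2 = doubleTrace (Fin N) (fun _ => f) := by
    simp only [doubleTrace, contraction_apply, Fin.prod_univ_four, Fin.isValue, Matrix.cons_val,
      Fintype.sum_prod_type, sq, sum_mul, mul_assoc]
    simp only [mul_sum]
  rw [potV, hdt]
  simp only [quadForm, pillow₁, pillow₂, pillow₃, tetrahedron, contraction_apply,
    Fin.prod_univ_two, Fin.prod_univ_four, Fin.isValue, Matrix.cons_val, Fintype.sum_prod_type, sq]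

theorem hasMixedDerivAtZero_potV (N : ℕ) (l2 ld lp lt a1 a2 a3 : ℝ)
    (X Y Z : Fin N → Fin N → Fin N → ℝ) :
    HasMixedDerivAtZero (fun s t => potV N l2 ld lp lt a1 a2 a3 (X + t • Y + s • Z))
      (l2 / 2 * diagHessian (quadForm (Fin N)) X Y Z
        + ld / (4 * (N : ℝ) ^ 3) * diagHessian (doubleTrace (Fin N)) X Y Z
        + lp / (4 * (N : ℝ) ^ 2) * (a1 * diagHessian (pillow₁ (Fin N)) X Y Z
          + a2 * diagHessian (pillow₂ (Fin N)) X Y Z + a3 * diagHessian (pillow₃ (Fin N)) X Y Z)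
        + lt / (4 * (N : ℝ) ^ ((3 : ℝ) / 2)) * diagHessian (tetrahedron (Fin N)) X Y Z) := by
  simp only [potV_eq_invariants]
  exact ((((hasMixedDerivAtZero_diag _ X Y Z).const_mul _).add
    ((hasMixedDerivAtZero_diag _ X Y Z).const_mul _)).add
    (((((hasMixedDerivAtZero_diag _ X Y Z).const_mul _).add
      ((hasMixedDerivAtZero_diag _ X Y Z).const_mul _)).add
        ((hasMixedDerivAtZero_diag _ X Y Z).const_mul _)).const_mul _)).add
    ((hasMixedDerivAtZero_diag _ X Y Z).const_mul _)

theorem hessApply_eq_deriv_deriv (N : ℕ) (l2 ld lp lt a1 a2 a3 : ℝ)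
    (φ χ : Fin N → Fin N → Fin N → ℝ) (a b c : Fin N) :
    hessApply N l2 ld lp lt a1 a2 a3 φ χ a b c
      = deriv (fun s : ℝ => deriv (fun t : ℝ => potV N l2 ld lp lt a1 a2 a3
          (φ + t • χ + s • rankOne (Pi.single a 1) (Pi.single b 1) (Pi.single c 1))) 0) 0 := by
  have hδ : ∀ a' b' c', (if a' = a ∧ b' = b ∧ c' = c then (1 : ℝ) else 0)
      = rankOne (Pi.single a 1) (Pi.single b 1) (Pi.single c 1) a' b' c' := by
    intro a' b' c'
    by_cases ha : a' = a <;> by_cases hb : b' = b <;> by_cases hc : c' = c <;>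
      simp [rankOne, ha, hb, hc]
  simp only [hessApply, hδ]
  rfl

section RankOne

variable {n : Type*} [Fintype n]

/- In the factorisations below the dot products are listed from the innermost summation index
outwards, which is the order in which distributing the product over the sums produces them. -/

theorem quadForm_rankOne (x y z : Fin 2 → n → ℝ) :
    quadForm n (fun k => rankOne (x k) (y k) (z k))
      = (z 0 ⬝ᵥ z 1) * (y 0 ⬝ᵥ y 1) * (x 0 ⬝ᵥ x 1) := by
  simp only [quadForm, contraction_apply, rankOne, Fin.prod_univ_two, Fin.isValue,
    Matrix.cons_val, Fintype.sum_prod_type, dotProduct, mul_sum, sum_mul]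
  congr! 3
  ring

variable (x y z : Fin 4 → n → ℝ)

theorem doubleTrace_rankOne :
    doubleTrace n (fun k => rankOne (x k) (y k) (z k))
      = (z 2 ⬝ᵥ z 3) * (y 2 ⬝ᵥ y 3) * (x 2 ⬝ᵥ x 3)
        * (z 0 ⬝ᵥ z 1) * (y 0 ⬝ᵥ y 1) * (x 0 ⬝ᵥ x 1) := by
  simp only [doubleTrace, contraction_apply, rankOne, Fin.prod_univ_four, Fin.isValue,
    Matrix.cons_val, Fintype.sum_prod_type, dotProduct, mul_sum, sum_mul]
  congr! 6
  ring

theorem pillow₁_rankOne :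
    pillow₁ n (fun k => rankOne (x k) (y k) (z k))
      = (z 1 ⬝ᵥ z 2) * (y 1 ⬝ᵥ y 2) * (x 2 ⬝ᵥ x 3)
        * (z 0 ⬝ᵥ z 3) * (y 0 ⬝ᵥ y 3) * (x 0 ⬝ᵥ x 1) := by
  simp only [pillow₁, contraction_apply, rankOne, Fin.prod_univ_four, Fin.isValue,
    Matrix.cons_val, Fintype.sum_prod_type, dotProduct, mul_sum, sum_mul]
  congr! 6
  ring

theorem pillow₂_rankOne :
    pillow₂ n (fun k => rankOne (x k) (y k) (z k))
      = (z 1 ⬝ᵥ z 2) * (y 2 ⬝ᵥ y 3) * (x 1 ⬝ᵥ x 2)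
        * (z 0 ⬝ᵥ z 3) * (y 0 ⬝ᵥ y 1) * (x 0 ⬝ᵥ x 3) := by
  simp only [pillow₂, contraction_apply, rankOne, Fin.prod_univ_four, Fin.isValue,
    Matrix.cons_val, Fintype.sum_prod_type, dotProduct, mul_sum, sum_mul]
  congr! 6
  ring

theorem pillow₃_rankOne :
    pillow₃ n (fun k => rankOne (x k) (y k) (z k))
      = (z 2 ⬝ᵥ z 3) * (y 1 ⬝ᵥ y 2) * (x 1 ⬝ᵥ x 2)
        * (z 0 ⬝ᵥ z 1) * (y 0 ⬝ᵥ y 3) * (x 0 ⬝ᵥ x 3) := by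
  simp only [pillow₃, contraction_apply, rankOne, Fin.prod_univ_four, Fin.isValue,
    Matrix.cons_val, Fintype.sum_prod_type, dotProduct, mul_sum, sum_mul]
  congr! 6
  ring

theorem tetrahedron_rankOne :
    tetrahedron n (fun k => rankOne (x k) (y k) (z k))
      = (z 1 ⬝ᵥ z 2) * (y 1 ⬝ᵥ y 3) * (x 2 ⬝ᵥ x 3)
        * (z 0 ⬝ᵥ z 3) * (y 0 ⬝ᵥ y 2) * (x 0 ⬝ᵥ x 1) := by
  simp only [tetrahedron, contraction_apply, rankOne, Fin.prod_univ_four, Fin.isValue,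
    Matrix.cons_val, Fintype.sum_prod_type, dotProduct, mul_sum, sum_mul]
  congr! 6
  ring

end RankOne

section Orthogonal

variable {n : Type*} [Fintype n] {u v w u' v' w' : n → ℝ} (p q r : n → ℝ)

theorem diagHessian_rankOne {ι : Type*} [Fintype ι] [DecidableEq ι]
    (M : ContinuousMultilinearMap ℝ (fun _ : ι => n → n → n → ℝ) ℝ) :
    diagHessian M (rankOne u v w) (rankOne u' v' w') (rankOne p q r)
      = ∑ i, ∑ j ∈ univ.erase i, M fun k =>
          rankOne (update (update (fun _ => u) i u') j p k)
            (update (update (fun _ => v) i v') j q k) (update (update (fun _ => w) i w') j r k) := by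
  simp only [diagHessian, ← update_rankOne]

theorem diagHessian_quadForm_rankOne :
    diagHessian (quadForm n) (rankOne u v w) (rankOne u' v' w') (rankOne p q r)
      = 2 * ((w' ⬝ᵥ r) * (v' ⬝ᵥ q) * (u' ⬝ᵥ p)) := by
  simp only [diagHessian_rankOne, quadForm_rankOne, Fin.isValue, mem_univ, sum_erase_eq_sub,
    Fin.sum_univ_two, update_self, ne_eq, one_ne_zero, not_false_eq_true, update_of_ne,
    zero_ne_one, dotProduct_comm, update_idem, sum_sub_distrib]
  ring

theorem diagHessian_doubleTrace_rankOne (hu : u' ⬝ᵥ u = 0) :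
    diagHessian (doubleTrace n) (rankOne u v w) (rankOne u' v' w') (rankOne p q r)
      = 4 * ((w ⬝ᵥ w) * (v ⬝ᵥ v) * (u ⬝ᵥ u)) * ((w' ⬝ᵥ r) * (v' ⬝ᵥ q) * (u' ⬝ᵥ p)) := by
  have hu' : u ⬝ᵥ u' = 0 := by rwa [dotProduct_comm]
  simp only [diagHessian_rankOne, doubleTrace_rankOne, Fin.isValue, mem_univ, sum_erase_eq_sub,
    Fin.sum_univ_four, ne_eq, Fin.reduceEq, not_false_eq_true, update_of_ne, update_self,
    one_ne_zero, zero_ne_one, dotProduct_comm, update_idem, sum_sub_distrib, mul_zero,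
    add_zero, hu', zero_mul, zero_add]
  ring

theorem diagHessian_pillow₁_rankOne (hu : u' ⬝ᵥ u = 0) (hv : v' ⬝ᵥ v = 0) :
    diagHessian (pillow₁ n) (rankOne u v w) (rankOne u' v' w') (rankOne p q r) = 0 := by
  have hu' : u ⬝ᵥ u' = 0 := by rwa [dotProduct_comm]
  have hv' : v ⬝ᵥ v' = 0 := by rwa [dotProduct_comm]
  rw [diagHessian_rankOne]
  refine sum_eq_zero fun i _ => sum_eq_zero fun j hj => ?_
  rw [pillow₁_rankOne]
  fin_cases i <;> fin_cases j <;> simp [hu, hv, hu', hv'] at hj ⊢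

theorem diagHessian_pillow₂_rankOne (hu : u' ⬝ᵥ u = 0) (hv : v' ⬝ᵥ v = 0) :
    diagHessian (pillow₂ n) (rankOne u v w) (rankOne u' v' w') (rankOne p q r) = 0 := by
  have hu' : u ⬝ᵥ u' = 0 := by rwa [dotProduct_comm]
  have hv' : v ⬝ᵥ v' = 0 := by rwa [dotProduct_comm]
  rw [diagHessian_rankOne]
  refine sum_eq_zero fun i _ => sum_eq_zero fun j hj => ?_
  rw [pillow₂_rankOne]
  fin_cases i <;> fin_cases j <;> simp [hu, hv, hu', hv'] at hj ⊢

theorem diagHessian_pillow₃_rankOne (hu : u' ⬝ᵥ u = 0) (hw : w' ⬝ᵥ w = 0) :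
    diagHessian (pillow₃ n) (rankOne u v w) (rankOne u' v' w') (rankOne p q r) = 0 := by
  have hu' : u ⬝ᵥ u' = 0 := by rwa [dotProduct_comm]
  have hw' : w ⬝ᵥ w' = 0 := by rwa [dotProduct_comm]
  rw [diagHessian_rankOne]
  refine sum_eq_zero fun i _ => sum_eq_zero fun j hj => ?_
  rw [pillow₃_rankOne]
  fin_cases i <;> fin_cases j <;> simp [hu, hw, hu', hw'] at hj ⊢

theorem diagHessian_tetrahedron_rankOne (hu : u' ⬝ᵥ u = 0) (hv : v' ⬝ᵥ v = 0) :
    diagHessian (tetrahedron n) (rankOne u v w) (rankOne u' v' w') (rankOne p q r) = 0 := by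
  have hu' : u ⬝ᵥ u' = 0 := by rwa [dotProduct_comm]
  have hv' : v ⬝ᵥ v' = 0 := by rwa [dotProduct_comm]
  rw [diagHessian_rankOne]
  refine sum_eq_zero fun i _ => sum_eq_zero fun j hj => ?_
  rw [tetrahedron_rankOne]
  fin_cases i <;> fin_cases j <;> simp [hu, hv, hu', hv'] at hj ⊢

end Orthogonal

end TensorModel

open TensorModel

theorem rank_one_hessian_triple_orthogonal_general (N : ℕ)
    (l2 ld lp lt a1 a2 a3 : ℝ)
    (u v w : Fin N → ℝ)
    (φ : Fin N → Fin N → Fin N → ℝ) (hφ : φ = fun a b c => u a * v b * w c)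
    (D : ℝ)
    (hD : D = ld + lp * (N : ℝ) * (a1 + a2 + a3) + lt * (N : ℝ) ^ ((3 : ℝ) / 2))
    (hD0 : D ≠ 0)
    (hsol : (∑ a, (u a) ^ 2) * (∑ b, (v b) ^ 2) * (∑ c, (w c) ^ 2)
      = -l2 * (N : ℝ) ^ 3 / D) :
    ∀ u' v' w' : Fin N → ℝ,
      (∑ a, u' a * u a) = 0 → (∑ b, v' b * v b) = 0 → (∑ c, w' c * w c) = 0 →
      hessApply N l2 ld lp lt a1 a2 a3 φ (fun a b c => u' a * v' b * w' c)
        = fun a b c =>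
          l2 * (lp * (N : ℝ) * (a1 + a2 + a3) + lt * (N : ℝ) ^ ((3 : ℝ) / 2)) / D *
            (u' a * v' b * w' c) := by
  intro u' v' w' hu hv hw
  funext a b c
  have hX : φ = rankOne u v w := hφ
  have hY : (fun a b c => u' a * v' b * w' c) = rankOne u' v' w' := rfl
  have hnorm : (w ⬝ᵥ w) * (v ⬝ᵥ v) * (u ⬝ᵥ u) = -l2 * (N : ℝ) ^ 3 / D := by
    simp only [dotProduct, ← sq]
    rw [← hsol]
    ring
  have hN : (N : ℝ) ≠ 0 := Nat.cast_ne_zero.mpr a.pos.ne'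
  rw [hX, hY, hessApply_eq_deriv_deriv, (hasMixedDerivAtZero_potV ..).deriv_deriv,
    diagHessian_quadForm_rankOne, diagHessian_doubleTrace_rankOne _ _ _ hu,
    diagHessian_pillow₁_rankOne _ _ _ hu hv, diagHessian_pillow₂_rankOne _ _ _ hu hv,
    diagHessian_pillow₃_rankOne _ _ _ hu hw, diagHessian_tetrahedron_rankOne _ _ _ hu hv, hnorm]
  simp only [dotProduct_single_one]
  field_simp
  rw [hD]
  ring

/-- Eigenvalue of the Hessian at a rank-one solution on the triply-orthogonal direction
`u'⊗v'⊗w'`. -/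
theorem rank_one_hessian_triple_orthogonal (N : ℕ) (hN : 1 ≤ N)
    (l2 ld lp lt a1 a2 a3 : ℝ)
    (u v w : Fin N → ℝ)
    (φ : Fin N → Fin N → Fin N → ℝ) (hφ : φ = fun a b c => u a * v b * w c)
    (D : ℝ)
    (hD : D = ld + lp * (N : ℝ) * (a1 + a2 + a3) + lt * (N : ℝ) ^ ((3 : ℝ) / 2))
    (hD0 : D ≠ 0)
    (hsol : (∑ a, (u a) ^ 2) * (∑ b, (v b) ^ 2) * (∑ c, (w c) ^ 2)
      = -l2 * (N : ℝ) ^ 3 / D) :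
    ∀ u' v' w' : Fin N → ℝ,
      (∑ a, u' a * u a) = 0 → (∑ b, v' b * v b) = 0 → (∑ c, w' c * w c) = 0 →
      hessApply N l2 ld lp lt a1 a2 a3 φ (fun a b c => u' a * v' b * w' c)
        = fun a b c =>
          l2 * (lp * (N : ℝ) * (a1 + a2 + a3) + lt * (N : ℝ) ^ ((3 : ℝ) / 2)) / D *
            (u' a * v' b * w' c) :=
  rank_one_hessian_triple_orthogonal_general N l2 ld lp lt a1 a2 a3 u v w φ hφ D hD hD0 hsol
end

section
/- Let u, v, w ∈ ℝ^N, φ_{abc} = u_a·v_b·w_c, D = λ_d + λ_p·N·(α₁+α₂+α₃) + λ_t·N^{3/2} with D ≠ 0, and assume |u|²·|v|²·|w|² = −λ₂·N³/D. Then the on-shell value of the potential is V(φ) = −λ₂²·N³/(4D); in particular V(φ) < 0 whenever λ₂ ≠ 0 and D > 0. -/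
/-!
On a rank-one tensor `φ = u ⊗ v ⊗ w` every quartic invariant of the model factorises as `P²`,
where `P = |u|²|v|²|w|² = Σ φ²`. The potential therefore restricts to the quadratic
`λ₂/2 · P + D/(4N³) · P²`, whose critical point is `P = -λ₂N³/D`; the value there is
`-λ₂²N³/(4D)`.
-/

open Finset

section
variable {ι R : Type*} [Fintype ι] [CommSemiring R]

theorem sum_sum_sum_mul_mul_s13 (p q r : ι → R) :
    ∑ a, ∑ b, ∑ c, p a * q b * r c = (∑ a, p a) * (∑ b, q b) * (∑ c, r c) := by
  rw [mul_assoc]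
  simp only [sum_mul]
  simp only [mul_sum, mul_assoc]

theorem sum_six_eq_sq_of_eq_mul (p q r : ι → R) (F : ι → ι → ι → ι → ι → ι → R)
    (hF : ∀ a b c a' b' c', F a b c a' b' c' = p a * q b * r c * (p a' * q b' * r c')) :
    ∑ a, ∑ b, ∑ c, ∑ a', ∑ b', ∑ c', F a b c a' b' c'
      = ((∑ a, p a) * (∑ b, q b) * (∑ c, r c)) ^ 2 := by
  rw [sq, ← sum_sum_sum_mul_mul_s13]
  simp only [sum_mul]
  simp only [mul_sum, hF]

end

theorem scaled_couplings_eq (N : ℕ) (ld lp lt s : ℝ) :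
    ld / (4 * (N : ℝ) ^ 3) + lp / (4 * (N : ℝ) ^ 2) * s + lt / (4 * (N : ℝ) ^ ((3 : ℝ) / 2))
      = (ld + lp * N * s + lt * (N : ℝ) ^ ((3 : ℝ) / 2)) / (4 * (N : ℝ) ^ 3) := by
  rcases eq_or_ne (N : ℝ) 0 with h | h
  · simp [h]
  · have hsq : ((N : ℝ) ^ ((3 : ℝ) / 2)) ^ 2 = (N : ℝ) ^ 3 := by
      rw [← Real.rpow_mul_natCast (Nat.cast_nonneg N)]
      norm_num
    have hne : (N : ℝ) ^ ((3 : ℝ) / 2) ≠ 0 := by positivity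
    field_simp
    linear_combination -lt * hsq

theorem potV_rankOne (N : ℕ) (l2 ld lp lt a1 a2 a3 : ℝ) (u v w : Fin N → ℝ) :
    potV N l2 ld lp lt a1 a2 a3 (fun a b c => u a * v b * w c)
      = l2 / 2 * ((∑ a, u a ^ 2) * (∑ b, v b ^ 2) * (∑ c, w c ^ 2))
        + (ld + lp * N * (a1 + a2 + a3) + lt * (N : ℝ) ^ ((3 : ℝ) / 2)) / (4 * (N : ℝ) ^ 3)
          * ((∑ a, u a ^ 2) * (∑ b, v b ^ 2) * (∑ c, w c ^ 2)) ^ 2 := by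
  have quadratic : ∑ a, ∑ b, ∑ c, (u a * v b * w c) ^ 2
      = (∑ a, u a ^ 2) * (∑ b, v b ^ 2) * (∑ c, w c ^ 2) := by
    simp only [mul_pow, sum_sum_sum_mul_mul_s13]
  have quartic := sum_six_eq_sq_of_eq_mul (fun a => u a ^ 2) (fun b => v b ^ 2) (fun c => w c ^ 2)
  rw [potV, quadratic, quartic _ fun _ _ _ _ _ _ => by ring, quartic _ fun _ _ _ _ _ _ => by ring,
    quartic _ fun _ _ _ _ _ _ => by ring, quartic _ fun _ _ _ _ _ _ => by ring, ← scaled_couplings_eq]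
  ring

theorem quadratic_value_at_critical_point (m K D : ℝ) (hD : D ≠ 0) :
    m / 2 * (-m * K / D) + D / (4 * K) * (-m * K / D) ^ 2 = -m ^ 2 * K / (4 * D) := by
  rcases eq_or_ne K 0 with rfl | hK
  · simp
  · field_simp
    ring

/-- The on-shell value of the potential at a rank-one solution is `-λ₂²N³/(4D)`;
in particular it is negative when `λ₂ ≠ 0` and `D > 0`. -/
theorem rank_one_onshell_potential (N : ℕ) (hN : 1 ≤ N)
    (l2 ld lp lt a1 a2 a3 : ℝ)
    (u v w : Fin N → ℝ)
    (φ : Fin N → Fin N → Fin N → ℝ) (hφ : φ = fun a b c => u a * v b * w c)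
    (D : ℝ)
    (hD : D = ld + lp * (N : ℝ) * (a1 + a2 + a3) + lt * (N : ℝ) ^ ((3 : ℝ) / 2))
    (hD0 : D ≠ 0)
    (hsol : (∑ a, (u a) ^ 2) * (∑ b, (v b) ^ 2) * (∑ c, (w c) ^ 2)
      = -l2 * (N : ℝ) ^ 3 / D) :
    potV N l2 ld lp lt a1 a2 a3 φ = -l2 ^ 2 * (N : ℝ) ^ 3 / (4 * D)
    ∧ (l2 ≠ 0 → 0 < D → potV N l2 ld lp lt a1 a2 a3 φ < 0) := by
  subst hφ
  have hval : potV N l2 ld lp lt a1 a2 a3 (fun a b c => u a * v b * w c)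
      = -l2 ^ 2 * (N : ℝ) ^ 3 / (4 * D) := by
    rw [potV_rankOne, ← hD, hsol]
    exact quadratic_value_at_critical_point l2 _ D hD0
  refine ⟨hval, fun hl2 hDpos => hval ▸ div_neg_of_neg_of_pos ?_ (by positivity)⟩
  have hNpos : (0 : ℝ) < N := by exact_mod_cast hN
  rw [neg_mul]
  exact neg_neg_of_pos (by positivity)
end

section
/- Let u ∈ ℝ^N be a nonzero vector, set φ_{abc} = u_a·δ_{bc}, and set D' = λ_d + λ_p·(N·α₁ + α₂ + α₃) + N^{1/2}·λ_t. Then φ satisfies the field equations if and only if λ₂ + (D'/N²)·|u|² = 0; in particular, if D' ≠ 0, this holds if and only if |u|² = −λ₂·N²/D'. -/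
open Finset

section Aux

variable (N : ℕ) (u : Fin N → ℝ)

lemma sumS_aux :
    (∑ a' : Fin N, ∑ b' : Fin N, ∑ c' : Fin N, (u a' * (if b' = c' then (1:ℝ) else 0))^2)
    = (N:ℝ) * (∑ a', u a' ^2) := by
  simp [mul_ite, ite_mul, Finset.sum_ite_eq, Finset.sum_ite_eq', Finset.mul_sum,
    Finset.sum_mul, mul_pow]
  all_goals ring_nf
  all_goals try (split_ifs <;> first | rfl | exact Finset.sum_congr rfl fun x _ => by ring)

lemma sum1_aux (a b c : Fin N) :
    (∑ a' : Fin N, ∑ b' : Fin N, ∑ c' : Fin N,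
      (u a * (if b' = c' then (1:ℝ) else 0)) * (u a' * (if b' = c' then (1:ℝ) else 0))
        * (u a' * (if b = c then (1:ℝ) else 0)))
    = (N:ℝ) * (∑ a', u a' ^2) * (u a * (if b = c then (1:ℝ) else 0)) := by
  simp [mul_ite, ite_mul, Finset.sum_ite_eq, Finset.sum_ite_eq', Finset.mul_sum,
    Finset.sum_mul, sq]
  all_goals ring_nf
  all_goals try (split_ifs <;> first | rfl | exact Finset.sum_congr rfl fun x _ => by ring)

lemma sum2_aux (a b c : Fin N) :
    (∑ a' : Fin N, ∑ b' : Fin N, ∑ c' : Fin N,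
      (u a' * (if b = c' then (1:ℝ) else 0)) * (u a' * (if b' = c' then (1:ℝ) else 0))
        * (u a * (if b' = c then (1:ℝ) else 0)))
    = (∑ a', u a' ^2) * (u a * (if b = c then (1:ℝ) else 0)) := by
  simp [mul_ite, ite_mul, Finset.sum_ite_eq, Finset.sum_ite_eq', Finset.mul_sum,
    Finset.sum_mul, sq, eq_comm]
  all_goals ring_nf
  all_goals try (split_ifs <;> first | rfl | exact Finset.sum_congr rfl fun x _ => by ring)

lemma sum3_aux (a b c : Fin N) :
    (∑ a' : Fin N, ∑ b' : Fin N, ∑ c' : Fin N,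
      (u a' * (if b' = c then (1:ℝ) else 0)) * (u a' * (if b' = c' then (1:ℝ) else 0))
        * (u a * (if b = c' then (1:ℝ) else 0)))
    = (∑ a', u a' ^2) * (u a * (if b = c then (1:ℝ) else 0)) := by
  simp [mul_ite, ite_mul, Finset.sum_ite_eq, Finset.sum_ite_eq', Finset.mul_sum,
    Finset.sum_mul, sq, eq_comm]
  all_goals ring_nf
  all_goals try (split_ifs <;> first | rfl | exact Finset.sum_congr rfl fun x _ => by ring)

lemma sumT_aux (a b c : Fin N) :
    (∑ a' : Fin N, ∑ b' : Fin N, ∑ c' : Fin N,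
      (u a * (if b' = c' then (1:ℝ) else 0)) * (u a' * (if b = c' then (1:ℝ) else 0))
        * (u a' * (if b' = c then (1:ℝ) else 0)))
    = (∑ a', u a' ^2) * (u a * (if b = c then (1:ℝ) else 0)) := by
  simp [mul_ite, ite_mul, Finset.sum_ite_eq, Finset.sum_ite_eq', Finset.mul_sum,
    Finset.sum_mul, sq, eq_comm]
  all_goals ring_nf
  all_goals try (split_ifs <;> first | rfl | exact Finset.sum_congr rfl fun x _ => by ring)

end Aux

/-- The ansatz `φ_{abc} = u_a δ_{bc}` (stabilizer `O(N-1) × O(N)`) solves the field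
equations iff `λ₂ + (D'/N²)|u|² = 0`, where
`D' = λ_d + λ_p(Nα₁+α₂+α₃) + N^{1/2}λ_t`; for `D' ≠ 0`, iff `|u|² = -λ₂N²/D'`. -/
theorem vector_delta_solution (N : ℕ) (hN : 1 ≤ N)
    (l2 ld lp lt a1 a2 a3 : ℝ)
    (u : Fin N → ℝ) (hu : u ≠ 0)
    (φ : Fin N → Fin N → Fin N → ℝ)
    (hφ : φ = fun a b c => u a * (if b = c then (1 : ℝ) else 0))
    (D' : ℝ)
    (hD' : D' = ld + lp * ((N : ℝ) * a1 + a2 + a3) + (N : ℝ) ^ ((1 : ℝ) / 2) * lt) :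
    (FieldEqs N l2 ld lp lt a1 a2 a3 φ ↔
      l2 + D' / (N : ℝ) ^ 2 * (∑ a, (u a) ^ 2) = 0)
    ∧ (D' ≠ 0 →
        (FieldEqs N l2 ld lp lt a1 a2 a3 φ ↔
          ∑ a, (u a) ^ 2 = -l2 * (N : ℝ) ^ 2 / D')) := by
  have hN0 : (0:ℝ) < (N:ℝ) := by exact_mod_cast Nat.lt_of_lt_of_le Nat.zero_lt_one hN
  have hNne : (N:ℝ) ≠ 0 := ne_of_gt hN0
  set S : ℝ := ∑ a, (u a) ^ 2 with hS
  set K : ℝ := l2 + D' / (N : ℝ) ^ 2 * S with hK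
  -- rpow facts
  have h32 : (N:ℝ) ^ ((3:ℝ)/2) * (N:ℝ) ^ ((1:ℝ)/2) = (N:ℝ) ^ 2 := by
    rw [← Real.rpow_add hN0]
    norm_num
  have h32ne : (N:ℝ) ^ ((3:ℝ)/2) ≠ 0 := ne_of_gt (Real.rpow_pos_of_pos hN0 _)
  have hlt : lt / (N:ℝ) ^ ((3:ℝ)/2) = (N:ℝ) ^ ((1:ℝ)/2) * lt / (N:ℝ) ^ 2 := by
    rw [div_eq_div_iff h32ne (by positivity)]
    rw [← h32]; ring
  -- the key computation: LHS of each field equation equals K * φ a b c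
  have key : ∀ a b c,
      l2 * φ a b c
      + ld / (N : ℝ) ^ 3 * (∑ a', ∑ b', ∑ c', (φ a' b' c') ^ 2) * φ a b c
      + lp / (N : ℝ) ^ 2 *
          (a1 * ∑ a', ∑ b', ∑ c', φ a b' c' * φ a' b' c' * φ a' b c
           + a2 * ∑ a', ∑ b', ∑ c', φ a' b c' * φ a' b' c' * φ a b' c
           + a3 * ∑ a', ∑ b', ∑ c', φ a' b' c * φ a' b' c' * φ a b c')
      + lt / (N : ℝ) ^ ((3 : ℝ) / 2) *
          ∑ a', ∑ b', ∑ c', φ a b' c' * φ a' b c' * φ a' b' c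
      = K * φ a b c := by
    intro a b c
    subst hφ
    rw [sumS_aux, sum1_aux, sum2_aux, sum3_aux, sumT_aux, hlt, hK, hD']
    field_simp
    split_ifs <;> ring
  have main : FieldEqs N l2 ld lp lt a1 a2 a3 φ ↔ K = 0 := by
    constructor
    · intro h
      obtain ⟨a, ha⟩ : ∃ a, u a ≠ 0 := by
        by_contra hc
        push_neg at hc
        exact hu (funext hc)
      have := h a ⟨0, hN⟩ ⟨0, hN⟩
      rw [key] at this
      have hφa : φ a ⟨0, hN⟩ ⟨0, hN⟩ = u a := by simp [hφ]
      rw [hφa] at this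
      rcases mul_eq_zero.mp this with h' | h'
      · exact h'
      · exact absurd h' ha
    · intro hK0 a b c
      rw [key, hK0, zero_mul]
  refine ⟨main, fun hD'ne => ?_⟩
  rw [main, hK]
  constructor
  · intro h
    field_simp at h ⊢
    linarith [h]
  · intro h
    rw [h]
    field_simp
    ring
end
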